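/- arXiv:1604.03421 — 10 statements merged into one kernel-verified Lean document; each statement's English description precedes it below -/
import Mathlib

section
/- Let g ≥ 2 be an integer. Suppose h ≥ 0 and r ≥ 0 are integers and m₁, …, m_r are integers with mᵢ ≥ 2 for all i, satisfying the Riemann–Hurwitz condition (as rational numbers) 2h − 2 + Σᵢ₌₁^r (1 − 1/mᵢ) = 1/2 − 1/(2g). Then h = 0 and r ∈ {3, 4}. -/
/-- Let `g ≥ 2`. If `h, r ≥ 0` are integers and `m₁, …, m_r` are integers with `mᵢ ≥ 2`,
satisfying (in `ℚ`) `2h − 2 + Σᵢ (1 − 1/mᵢ) = 1/2 − 1/(2g)`, then `h = 0` and `r ∈ {3, 4}`. -/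
theorem riemannHurwitz_genus_zero_three_or_four_periods
    (g h r : ℕ) (hg : 2 ≤ g) (m : Fin r → ℕ) (hm : ∀ i, 2 ≤ m i)
    (heq : 2 * (h : ℚ) - 2 + ∑ i, (1 - 1 / (m i : ℚ)) = 1 / 2 - 1 / (2 * (g : ℚ))) :
    h = 0 ∧ (r = 3 ∨ r = 4) := by
  have hg4 : (4 : ℚ) ≤ 2 * (g : ℚ) := by
    have : (2 : ℚ) ≤ (g : ℚ) := by exact_mod_cast hg
    linarith
  have hgpos : (0 : ℚ) < 2 * (g : ℚ) := by linarith
  have hinv1 : 1 / (2 * (g : ℚ)) ≤ 1 / 4 := by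
    apply div_le_div_of_nonneg_left (by norm_num) (by norm_num) hg4
  have hinv2 : (0 : ℚ) < 1 / (2 * (g : ℚ)) := by positivity
  set S : ℚ := ∑ i, (1 - 1 / (m i : ℚ)) with hS
  have hterm_lo : ∀ i : Fin r, (1 / 2 : ℚ) ≤ 1 - 1 / (m i : ℚ) := by
    intro i
    have h2 : (2 : ℚ) ≤ (m i : ℚ) := by exact_mod_cast hm i
    have : 1 / (m i : ℚ) ≤ 1 / 2 :=
      div_le_div_of_nonneg_left (by norm_num) (by norm_num) h2
    linarith
  have hterm_hi : ∀ i : Fin r, (1 - 1 / (m i : ℚ)) ≤ 1 := by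
    intro i
    have h2 : (0 : ℚ) < (m i : ℚ) := by
      have := hm i; positivity
    have : (0 : ℚ) ≤ 1 / (m i : ℚ) := by positivity
    linarith
  have hlo : (r : ℚ) / 2 ≤ S := by
    calc (r : ℚ) / 2 = ∑ _i : Fin r, (1 / 2 : ℚ) := by
          simp [Finset.sum_const, mul_comm]
          ring
      _ ≤ S := Finset.sum_le_sum fun i _ => hterm_lo i
  have hhi : S ≤ (r : ℚ) := by
    calc S ≤ ∑ _i : Fin r, (1 : ℚ) := Finset.sum_le_sum fun i _ => hterm_hi i
      _ = (r : ℚ) := by simp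
  have hh0 : h = 0 := by
    by_contra hne
    have h1 : (1 : ℚ) ≤ (h : ℚ) := by exact_mod_cast Nat.one_le_iff_ne_zero.mpr hne
    have hr0 : (r : ℚ) < 1 := by nlinarith
    have hr0' : r = 0 := by exact_mod_cast Nat.lt_one_iff.mp (by exact_mod_cast hr0)
    subst hr0'
    have hS0 : S = 0 := by simp [hS]
    rcases Nat.lt_or_ge h 2 with h2 | h2
    · have hc : h = 1 := by omega
      have hc' : (h : ℚ) = 1 := by exact_mod_cast hc
      rw [hS0] at heq
      linarith
    · have : (2 : ℚ) ≤ (h : ℚ) := by exact_mod_cast h2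
      rw [hS0] at heq
      linarith
  subst hh0
  simp only [Nat.cast_zero, mul_zero] at heq
  constructor
  · rfl
  · have hr5 : (r : ℚ) < 5 := by linarith
    have hr2 : (2 : ℚ) < (r : ℚ) := by linarith
    have h5 : r < 5 := by exact_mod_cast hr5
    have h2 : 2 < r := by exact_mod_cast hr2
    omega
end

section
/- Let g ≥ 2 be an integer and let m₁ ≤ m₂ ≤ m₃ ≤ m₄ be integers with each mᵢ ≥ 2 and each mᵢ dividing 4g, satisfying (in ℚ) 1/m₁ + 1/m₂ + 1/m₃ + 1/m₄ = 3/2 + 1/(2g). Then either (m₁, m₂, m₃, m₄) = (2, 2, 2, 2g), or g = 3 and (m₁, m₂, m₃, m₄) = (2, 2, 3, 3), or g = 6 and (m₁, m₂, m₃, m₄) = (2, 2, 3, 4), or g = 15 and (m₁, m₂, m₃, m₄) = (2, 2, 3, 5). -/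
/-- Let `g ≥ 2` and let `m₁ ≤ m₂ ≤ m₃ ≤ m₄` be integers, each `≥ 2` and each dividing `4g`,
with `1/m₁ + 1/m₂ + 1/m₃ + 1/m₄ = 3/2 + 1/(2g)` in `ℚ`. Then `(m₁,m₂,m₃,m₄) = (2,2,2,2g)`,
or `g = 3` and `(m₁,m₂,m₃,m₄) = (2,2,3,3)`, or `g = 6` and `(m₁,m₂,m₃,m₄) = (2,2,3,4)`,
or `g = 15` and `(m₁,m₂,m₃,m₄) = (2,2,3,5)`. -/
theorem four_periods_classification
    (g m₁ m₂ m₃ m₄ : ℕ) (hg : 2 ≤ g)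
    (h12 : m₁ ≤ m₂) (h23 : m₂ ≤ m₃) (h34 : m₃ ≤ m₄)
    (hm1 : 2 ≤ m₁) (hm2 : 2 ≤ m₂) (hm3 : 2 ≤ m₃) (hm4 : 2 ≤ m₄)
    (hd1 : m₁ ∣ 4 * g) (hd2 : m₂ ∣ 4 * g) (hd3 : m₃ ∣ 4 * g) (hd4 : m₄ ∣ 4 * g)
    (heq : 1 / (m₁ : ℚ) + 1 / (m₂ : ℚ) + 1 / (m₃ : ℚ) + 1 / (m₄ : ℚ)
        = 3 / 2 + 1 / (2 * (g : ℚ))) :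
    (m₁ = 2 ∧ m₂ = 2 ∧ m₃ = 2 ∧ m₄ = 2 * g) ∨
    (g = 3 ∧ m₁ = 2 ∧ m₂ = 2 ∧ m₃ = 3 ∧ m₄ = 3) ∨
    (g = 6 ∧ m₁ = 2 ∧ m₂ = 2 ∧ m₃ = 3 ∧ m₄ = 4) ∨
    (g = 15 ∧ m₁ = 2 ∧ m₂ = 2 ∧ m₃ = 3 ∧ m₄ = 5) := by
  have hgq : (2:ℚ) ≤ g := by exact_mod_cast hg
  have hgpos : (0:ℚ) < 2 * g := by linarith
  have hrg : (0:ℚ) < 1 / (2 * (g:ℚ)) := by positivity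
  have e1 : (2:ℚ) ≤ m₁ := by exact_mod_cast hm1
  have e2 : (2:ℚ) ≤ m₂ := by exact_mod_cast hm2
  have e3 : (2:ℚ) ≤ m₃ := by exact_mod_cast hm3
  have e4 : (2:ℚ) ≤ m₄ := by exact_mod_cast hm4
  have hm1' : m₁ = 2 := by
    by_contra h
    have h3 : 3 ≤ m₁ := lt_of_le_of_ne hm1 (Ne.symm h)
    have h3q : (3:ℚ) ≤ m₁ := by exact_mod_cast h3
    have h3q2 : (3:ℚ) ≤ m₂ := by exact_mod_cast le_trans h3 h12
    have h3q3 : (3:ℚ) ≤ m₃ := by exact_mod_cast le_trans h3 (le_trans h12 h23)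
    have h3q4 : (3:ℚ) ≤ m₄ := by exact_mod_cast le_trans h3 (le_trans h12 (le_trans h23 h34))
    have i1 : 1/(m₁:ℚ) ≤ 1/3 := by apply one_div_le_one_div_of_le <;> norm_num <;> linarith
    have i2 : 1/(m₂:ℚ) ≤ 1/3 := by apply one_div_le_one_div_of_le <;> norm_num <;> linarith
    have i3 : 1/(m₃:ℚ) ≤ 1/3 := by apply one_div_le_one_div_of_le <;> norm_num <;> linarith
    have i4 : 1/(m₄:ℚ) ≤ 1/3 := by apply one_div_le_one_div_of_le <;> norm_num <;> linarith
    linarith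
  subst hm1'
  push_cast at heq
  have hm2' : m₂ = 2 := by
    by_contra h
    have h3 : 3 ≤ m₂ := lt_of_le_of_ne hm2 (Ne.symm h)
    have h3q2 : (3:ℚ) ≤ m₂ := by exact_mod_cast h3
    have h3q3 : (3:ℚ) ≤ m₃ := by exact_mod_cast le_trans h3 h23
    have h3q4 : (3:ℚ) ≤ m₄ := by exact_mod_cast le_trans h3 (le_trans h23 h34)
    have i2 : 1/(m₂:ℚ) ≤ 1/3 := by apply one_div_le_one_div_of_le <;> norm_num <;> linarith
    have i3 : 1/(m₃:ℚ) ≤ 1/3 := by apply one_div_le_one_div_of_le <;> norm_num <;> linarith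
    have i4 : 1/(m₄:ℚ) ≤ 1/3 := by apply one_div_le_one_div_of_le <;> norm_num <;> linarith
    linarith
  subst hm2'
  push_cast at heq
  have hm3' : m₃ ≤ 3 := by
    by_contra h
    have h4 : 4 ≤ m₃ := by omega
    have h4q3 : (4:ℚ) ≤ m₃ := by exact_mod_cast h4
    have h4q4 : (4:ℚ) ≤ m₄ := by exact_mod_cast le_trans h4 h34
    have i3 : 1/(m₃:ℚ) ≤ 1/4 := by apply one_div_le_one_div_of_le <;> norm_num <;> linarith
    have i4 : 1/(m₄:ℚ) ≤ 1/4 := by apply one_div_le_one_div_of_le <;> norm_num <;> linarith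
    linarith
  interval_cases m₃
  · -- m₃ = 2
    push_cast at heq
    have hm4q : (m₄:ℚ) = 2 * g := by
      have hp : (0:ℚ) < m₄ := by linarith
      field_simp at heq
      linarith
    left
    refine ⟨rfl, rfl, rfl, ?_⟩
    exact_mod_cast hm4q
  · -- m₃ = 3
    have hm34 : 3 ≤ m₄ := h34
    have h6 : 1/6 < 1/(m₄:ℚ) := by
      have : (1:ℚ)/(m₄:ℚ) = 1/6 + 1/(2*(g:ℚ)) := by
        push_cast at heq ⊢
        linarith
      linarith
    have hm4le : m₄ ≤ 5 := by
      by_contra h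
      have h6' : 6 ≤ m₄ := by omega
      have h6q : (6:ℚ) ≤ m₄ := by exact_mod_cast h6'
      have : 1/(m₄:ℚ) ≤ 1/6 := by apply one_div_le_one_div_of_le <;> norm_num <;> linarith
      linarith
    interval_cases m₄
    · -- m₄ = 3 : g = 3
      right; left
      have : (g:ℚ) = 3 := by
        push_cast at heq
        field_simp at heq
        linarith
      exact ⟨by exact_mod_cast this, rfl, rfl, rfl, rfl⟩
    · -- m₄ = 4 : g = 6
      right; right; left
      have : (g:ℚ) = 6 := by
        push_cast at heq
        field_simp at heq
        linarith
      exact ⟨by exact_mod_cast this, rfl, rfl, rfl, rfl⟩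
    · -- m₄ = 5 : g = 15
      right; right; right
      have : (g:ℚ) = 15 := by
        push_cast at heq
        field_simp at heq
        linarith
      exact ⟨by exact_mod_cast this, rfl, rfl, rfl, rfl⟩
end

section
/- Let g ≥ 2 be an integer and let m₂ ≤ m₃ be integers with m₂, m₃ ≥ 2, each dividing 4g, satisfying (in ℚ) 1/2 + 1/m₂ + 1/m₃ = 1/2 + 1/(2g). Then m₂ = m₃ = 4g. -/
/-- Let `g ≥ 2` and let `m₂ ≤ m₃` be integers with `m₂, m₃ ≥ 2`, each dividing `4g`, such that
`1/2 + 1/m₂ + 1/m₃ = 1/2 + 1/(2g)` in `ℚ`. Then `m₂ = m₃ = 4g`. -/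
theorem three_periods_first_period_two
    (g m₂ m₃ : ℕ) (hg : 2 ≤ g) (h23 : m₂ ≤ m₃)
    (hm2 : 2 ≤ m₂) (hm3 : 2 ≤ m₃) (hd2 : m₂ ∣ 4 * g) (hd3 : m₃ ∣ 4 * g)
    (heq : 1 / 2 + 1 / (m₂ : ℚ) + 1 / (m₃ : ℚ) = 1 / 2 + 1 / (2 * (g : ℚ))) :
    m₂ = 4 * g ∧ m₃ = 4 * g := by
  obtain ⟨a, ha⟩ := hd2
  obtain ⟨b, hb⟩ := hd3
  have hg0 : (0:ℚ) < g := by positivity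
  have hm20 : (0:ℚ) < m₂ := by exact_mod_cast (by omega : 0 < m₂)
  have hm30 : (0:ℚ) < m₃ := by exact_mod_cast (by omega : 0 < m₃)
  have haQ : (4:ℚ) * g = m₂ * a := by exact_mod_cast congrArg (Nat.cast : ℕ → ℚ) ha
  have hbQ : (4:ℚ) * g = m₃ * b := by exact_mod_cast congrArg (Nat.cast : ℕ → ℚ) hb
  have h1 : ((m₃:ℚ) + m₂) * (2 * g) = m₂ * m₃ := by
    have h1 : 1 / (m₂:ℚ) + 1 / m₃ = 1 / (2 * g) := by linarith
    field_simp at h1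
    linarith
  have hz : (m₂:ℚ) * m₃ * ((a:ℚ) + b) = (m₂:ℚ) * m₃ * 2 := by
    linear_combination (-(m₃:ℚ)) * haQ - (m₂:ℚ) * hbQ + 2 * h1
  have hab : (a:ℚ) + b = 2 := mul_left_cancel₀ (by positivity) hz
  have habN : a + b = 2 := by exact_mod_cast hab
  have ha0 : a ≠ 0 := by rintro rfl; simp at ha; omega
  have hb0 : b ≠ 0 := by rintro rfl; simp at hb; omega
  have ha1 : a = 1 := by omega
  have hb1 : b = 1 := by omega
  subst ha1 hb1
  simp at ha hb
  omega
end

section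
/- Let g ≥ 2 be an integer. There is no group G of order 4g that is generated by an element A of order 3 together with an element C of order 2g. -/
/-- Let `g ≥ 2`. There is no group `G` of order `4g` generated by an element `A` of order 3
together with an element `C` of order `2g`. -/
theorem no_group_of_order_four_g_generated_by_orders_three_and_two_g
    (g : ℕ) (hg : 2 ≤ g) (G : Type*) [Group G]
    (hcard : Nat.card G = 4 * g) (A C : G)
    (hA : orderOf A = 3) (hC : orderOf C = 2 * g)
    (hgen : Subgroup.closure ({A, C} : Set G) = ⊤) : False := by
  set H := Subgroup.zpowers C with hH
  have hcardH : Nat.card H = 2 * g := by rw [Nat.card_zpowers, hC]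
  have hmul : Nat.card H * H.index = 4 * g := by rw [Subgroup.card_mul_index, hcard]
  have hg0 : (0 : ℕ) < g := by omega
  have hindex : H.index = 2 := by
    rw [hcardH] at hmul
    have : 2 * g * H.index = 2 * g * 2 := by omega
    exact Nat.eq_of_mul_eq_mul_left (by omega) this
  have hA2 : A ^ 2 ∈ H := Subgroup.sq_mem_of_index_two hindex A
  have hA4 : A ^ 4 = A := by
    have h3 : A ^ 3 = 1 := by rw [← hA]; exact pow_orderOf_eq_one A
    calc A ^ 4 = A ^ 3 * A := by rw [← pow_succ]
    _ = A := by rw [h3, one_mul]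
  have hAH : A ∈ H := by
    have : (A ^ 2) ^ 2 ∈ H := pow_mem hA2 2
    rwa [← pow_mul, show 2 * 2 = 4 from rfl, hA4] at this
  have hCH : C ∈ H := Subgroup.mem_zpowers C
  have hsub : Subgroup.closure ({A, C} : Set G) ≤ H := by
    rw [Subgroup.closure_le]
    intro x hx
    rcases hx with h | h
    · exact h ▸ hAH
    · rw [Set.mem_singleton_iff] at h
      exact h ▸ hCH
  rw [hgen] at hsub
  have : Nat.card G ≤ Nat.card H := by
    have : H = ⊤ := top_le_iff.mp hsub
    rw [this, Subgroup.card_top]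
  omega
end

section
/- Let g ≥ 2 be an integer and let G be the dicyclic group of order 4g, generated by elements C of order 2g and A with A² = C^g and ACA⁻¹ = C⁻¹ (Mathlib's QuaternionGroup g with C = a and A = the standard element b). Then there exists a group automorphism α of G with α(C) = C⁻¹ and α(A) = A⁻¹C⁻¹; moreover α(A⁻¹C⁻¹) = A, so α interchanges A and B := A⁻¹C⁻¹. -/
open QuaternionGroup

private def swapFun (g : ℕ) : QuaternionGroup g → QuaternionGroup g
  | a i => a (-i)
  | xa i => xa ((g : ZMod (2 * g)) - 1 - i)

private lemma swapFun_mul (g : ℕ) (x y : QuaternionGroup g) :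
    swapFun g (x * y) = swapFun g x * swapFun g y := by
  rcases x with i | i <;> rcases y with j | j <;>
    simp only [swapFun, a_mul_a, a_mul_xa, xa_mul_a, xa_mul_xa] <;>
    congr 1 <;> ring_nf
  have h : ((g : ZMod (2*g)) : ZMod (2*g)) = -(g : ZMod (2*g)) := by
    rw [eq_neg_iff_add_eq_zero, ← Nat.cast_add, ← two_mul, ZMod.natCast_self]
  rw [← h]

private def swapEquiv (g : ℕ) : QuaternionGroup g ≃* QuaternionGroup g where
  toFun := swapFun g
  invFun := swapFun g
  left_inv x := by rcases x with i | i <;> simp [swapFun]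
  right_inv x := by rcases x with i | i <;> simp [swapFun]
  map_mul' := swapFun_mul g

/-- Let `g ≥ 2` and let `G = QuaternionGroup g` be the dicyclic group of order `4g`, with
`C = a 1` of order `2g` and `A = xa 0` satisfying `A² = C^g` and `ACA⁻¹ = C⁻¹`. Then there is a
group automorphism `α` of `G` with `α(C) = C⁻¹` and `α(A) = A⁻¹C⁻¹`; moreover
`α(A⁻¹C⁻¹) = A`, so `α` interchanges `A` and `B := A⁻¹C⁻¹`. -/
theorem dicyclic_swapping_automorphism (g : ℕ) (hg : 2 ≤ g) :
    ∃ α : QuaternionGroup g ≃* QuaternionGroup g,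
      α (QuaternionGroup.a 1) = (QuaternionGroup.a 1)⁻¹ ∧
      α (QuaternionGroup.xa 0) = (QuaternionGroup.xa 0)⁻¹ * (QuaternionGroup.a 1)⁻¹ ∧
      α ((QuaternionGroup.xa 0)⁻¹ * (QuaternionGroup.a 1)⁻¹) = QuaternionGroup.xa 0 := by
  refine ⟨swapEquiv g, ?_, ?_, ?_⟩
  · have hc : ∀ x, (swapEquiv g) x = swapFun g x := fun _ => rfl
    rw [hc]
    rw [show ((a 1 : QuaternionGroup g))⁻¹ = a (-1) from rfl]
    simp [swapFun]
  · have hc : ∀ x, (swapEquiv g) x = swapFun g x := fun _ => rfl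
    rw [hc]
    rw [show ((xa 0 : QuaternionGroup g))⁻¹ = xa ((g : ZMod (2*g)) + 0) from rfl,
      show ((a 1 : QuaternionGroup g))⁻¹ = a (-1) from rfl, xa_mul_a]
    simp [swapFun]; ring
  · have hc : ∀ x, (swapEquiv g) x = swapFun g x := fun _ => rfl
    rw [hc]
    rw [show ((xa 0 : QuaternionGroup g))⁻¹ = xa ((g : ZMod (2*g)) + 0) from rfl,
      show ((a 1 : QuaternionGroup g))⁻¹ = a (-1) from rfl, xa_mul_a]
    simp [swapFun]; ring
end

section
/- Let g ≥ 2 be an integer and let G be a group of order 4g generated by elements a₁, a₂, a₃, d where a₁, a₂, a₃ each have order 2, d has order 2g, and a₁a₂a₃d = 1. Then G is isomorphic to the dihedral group of order 4g (Mathlib's DihedralGroup (2g)). -/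
/-- Auxiliary map from the dihedral group to a group with chosen elements `d` (rotation image)
and `a` (reflection image). -/
private def dihedralMapAux {G : Type*} [Group G] (n : ℕ) (d a : G) :
    DihedralGroup n → G
  | .r i => d ^ (i.val : ℤ)
  | .sr i => a * d ^ (i.val : ℤ)

private theorem dihedralMapAux_r {G : Type*} [Group G] (n : ℕ) (d a : G) (i : ZMod n) :
    dihedralMapAux n d a (.r i) = d ^ (i.val : ℤ) := rfl

private theorem dihedralMapAux_sr {G : Type*} [Group G] (n : ℕ) (d a : G) (i : ZMod n) :
    dihedralMapAux n d a (.sr i) = a * d ^ (i.val : ℤ) := rfl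

/-- Let `g ≥ 2` and let `G` be a group of order `4g` generated by `a₁, a₂, a₃, d`, where
`a₁, a₂, a₃` have order 2, `d` has order `2g`, and `a₁a₂a₃d = 1`. Then `G` is isomorphic to
the dihedral group of order `4g` (Mathlib's `DihedralGroup (2g)`). -/
theorem group_of_order_four_g_is_dihedral
    (g : ℕ) (hg : 2 ≤ g) (G : Type*) [Group G]
    (hcard : Nat.card G = 4 * g) (a₁ a₂ a₃ d : G)
    (h1 : orderOf a₁ = 2) (h2 : orderOf a₂ = 2) (h3 : orderOf a₃ = 2)
    (hd : orderOf d = 2 * g) (hrel : a₁ * a₂ * a₃ * d = 1)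
    (hgen : Subgroup.closure ({a₁, a₂, a₃, d} : Set G) = ⊤) :
    Nonempty (G ≃* DihedralGroup (2 * g)) := by
  have hg0 : g ≠ 0 := by omega
  set N := Subgroup.zpowers d with hNdef
  have hNcard : Nat.card N = 2 * g := by rw [Nat.card_zpowers, hd]
  have hidx : N.index = 2 := by
    have h := Subgroup.card_mul_index N
    rw [hNcard, hcard] at h
    have h4 : 2 * g * N.index = 2 * g * 2 := by omega
    exact Nat.eq_of_mul_eq_mul_left (by omega) h4
  have memiff : ∀ x y : G, x * y ∈ N ↔ (x ∈ N ↔ y ∈ N) := fun x y =>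
    Subgroup.mul_mem_iff_of_index_two hidx
  have hdN : d ∈ N := Subgroup.mem_zpowers d
  have hdpow : ∀ i : ℤ, d ^ i ∈ N := fun i => zpow_mem hdN i
  have hdord : d ^ ((2 * g : ℕ) : ℤ) = 1 := by
    rw [← hd]; exact_mod_cast pow_orderOf_eq_one d
  -- the unique involution inside N is d^g
  have invol : ∀ x : G, x ∈ N → orderOf x = 2 → x = d ^ (g : ℤ) := by
    intro x hx hox
    obtain ⟨k, hk⟩ := Subgroup.mem_zpowers_iff.mp hx
    have hx2 : x * x = 1 := by
      have := pow_orderOf_eq_one x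
      rwa [hox, pow_two] at this
    have h2k : d ^ (2 * k) = 1 := by
      rw [two_mul, zpow_add, hk]; exact hx2
    have hdvd : ((2 * g : ℕ) : ℤ) ∣ 2 * k := by
      rw [← hd]; exact orderOf_dvd_iff_zpow_eq_one.mpr h2k
    have hgk : (g : ℤ) ∣ k := by
      obtain ⟨c, hc⟩ := hdvd
      refine ⟨c, ?_⟩
      have : (2 : ℤ) * k = 2 * ((g : ℤ) * c) := by push_cast at hc ⊢; linarith
      linarith
    obtain ⟨t, ht⟩ := hgk
    rcases Int.even_or_odd t with ⟨s, hs⟩ | ⟨s, hs⟩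
    · exfalso
      have : x = 1 := by
        rw [← hk, ht, hs]
        have : (g : ℤ) * (s + s) = ((2 * g : ℕ) : ℤ) * s := by push_cast; ring
        rw [this, zpow_mul, hdord, one_zpow]
      rw [this] at hox; simp at hox
    · rw [← hk, ht, hs]
      have : (g : ℤ) * (2 * s + 1) = ((2 * g : ℕ) : ℤ) * s + g := by push_cast; ring
      rw [this, zpow_add, zpow_mul, hdord, one_zpow, one_mul]
  -- not all generators lie in N
  have hnotall : ¬ (a₁ ∈ N ∧ a₂ ∈ N ∧ a₃ ∈ N) := by
    rintro ⟨m1, m2, m3⟩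
    have : Subgroup.closure ({a₁, a₂, a₃, d} : Set G) ≤ N := by
      rw [Subgroup.closure_le]
      intro x hx
      simp only [Set.mem_insert_iff, Set.mem_singleton_iff] at hx
      rcases hx with rfl | rfl | rfl | rfl <;> assumption
    rw [hgen] at this
    have hNtop : N = ⊤ := top_le_iff.mp this
    have : Nat.card N = Nat.card G := by rw [hNtop]; exact Subgroup.card_top
    rw [hNcard, hcard] at this
    omega
  -- involution facts
  have hinv1 : a₁ * a₁ = 1 := by
    have := pow_orderOf_eq_one a₁; rwa [h1, pow_two] at this
  have hinv2 : a₂ * a₂ = 1 := by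
    have := pow_orderOf_eq_one a₂; rwa [h2, pow_two] at this
  have hinv3 : a₃ * a₃ = 1 := by
    have := pow_orderOf_eq_one a₃; rwa [h3, pow_two] at this
  have hinv1' : a₁⁻¹ = a₁ := inv_eq_of_mul_eq_one_right hinv1
  have hinv2' : a₂⁻¹ = a₂ := inv_eq_of_mul_eq_one_right hinv2
  -- membership parity
  have hprodN : a₁ * a₂ * a₃ ∈ N := by
    have h := eq_inv_of_mul_eq_one_left hrel
    rw [h]; exact inv_mem hdN
  have hparity : ((a₁ ∈ N ↔ a₂ ∈ N) ↔ a₃ ∈ N) := by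
    rw [← memiff, ← memiff]; exact hprodN
  -- generator expressions
  have h2eq : a₂ = a₁⁻¹ * d⁻¹ * a₃⁻¹ := by
    have h := congrArg (fun x => a₁⁻¹ * x * d⁻¹ * a₃⁻¹) hrel
    simp only [mul_one] at h
    rw [← h]; group
  have h3eq : a₃ = a₂⁻¹ * a₁⁻¹ * d⁻¹ := by
    have h := congrArg (fun x => a₂⁻¹ * a₁⁻¹ * x * d⁻¹) hrel
    simp only [mul_one] at h
    rw [← h]; group
  set m : ℤ := (g : ℤ) + 1 with hmdef
  -- key involution outside N
  obtain ⟨a, haN, haa, hkey⟩ :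
      ∃ a : G, a ∉ N ∧ a * a = 1 ∧ a * d ^ (-m) * a = d ^ m := by
    by_cases m1 : a₁ ∈ N <;> by_cases m2 : a₂ ∈ N <;> by_cases m3 : a₃ ∈ N
    · exact absurd ⟨m1, m2, m3⟩ hnotall
    · tauto
    · tauto
    -- m1, ¬m2, ¬m3 : a₁ = d^g, a₃ = a₂ * d^(-m)
    · refine ⟨a₂, m2, hinv2, ?_⟩
      have he1 : a₁ = d ^ (g : ℤ) := invol a₁ m1 h1
      have h3' : a₃ = a₂ * d ^ (-m) := by
        rw [h3eq, hinv2', he1, mul_assoc]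
        congr 1
        rw [← zpow_neg, ← zpow_neg_one, ← zpow_add]
        congr 1
        simp only [hmdef]; ring
      have := hinv3
      rw [h3'] at this
      have h' : a₂ * d ^ (-m) * a₂ * d ^ (-m) = 1 := by
        rw [← this]; group
      have := eq_inv_of_mul_eq_one_left h'
      rwa [← zpow_neg, neg_neg] at this
    · tauto
    -- ¬m1, m2, ¬m3 : a₂ = d^g, a₃ = d^(-g) * a₁ * d⁻¹
    · refine ⟨a₁, m1, hinv1, ?_⟩
      have he2 : a₂ = d ^ (g : ℤ) := invol a₂ m2 h2
      have h3' : a₃ = d ^ (-(g:ℤ)) * a₁ * d⁻¹ := by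
        rw [h3eq, he2, hinv1', ← zpow_neg]
      have hh := hinv3
      rw [h3'] at hh
      -- d^(-g) * a₁ * d⁻¹ * (d^(-g) * a₁ * d⁻¹) = 1
      have h2' := congrArg (fun x => d ^ (g:ℤ) * x * d) hh
      simp only [mul_one] at h2'
      have hLHS : d ^ (g:ℤ) * (d ^ (-(g:ℤ)) * a₁ * d⁻¹ * (d ^ (-(g:ℤ)) * a₁ * d⁻¹)) * d
          = a₁ * (d⁻¹ * d ^ (-(g:ℤ))) * a₁ := by group
      rw [hLHS] at h2'
      have hdm : d⁻¹ * d ^ (-(g:ℤ)) = d ^ (-m) := by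
        rw [← zpow_neg_one, ← zpow_add]; congr 1; simp only [hmdef]; ring
      rw [hdm] at h2'
      rw [h2', hmdef, zpow_add, zpow_one]
    -- ¬m1, ¬m2, m3 : a₃ = d^g, a₂ = a₁ * d^(-m)
    · refine ⟨a₁, m1, hinv1, ?_⟩
      have he3 : a₃ = d ^ (g : ℤ) := invol a₃ m3 h3
      have h2' : a₂ = a₁ * d ^ (-m) := by
        rw [h2eq, hinv1', he3, mul_assoc]
        congr 1
        rw [← zpow_neg, ← zpow_neg_one, ← zpow_add]
        congr 1
        simp only [hmdef]; ring
      have := hinv2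
      rw [h2'] at this
      have h' : a₁ * d ^ (-m) * a₁ * d ^ (-m) = 1 := by
        rw [← this]; group
      have := eq_inv_of_mul_eq_one_left h'
      rwa [← zpow_neg, neg_neg] at this
    · tauto
  have hainv : a⁻¹ = a := inv_eq_of_mul_eq_one_right haa
  -- conjugation by a maps d into N
  have hdaN : d * a ∉ N := by
    rw [memiff]; tauto
  have hadaN : a * d * a ∈ N := by
    rw [mul_assoc, memiff]; tauto
  obtain ⟨k, hk⟩ := Subgroup.mem_zpowers_iff.mp hadaN
  have hconj : ∀ n : ℤ, a * d ^ n * a = d ^ (k * n) := by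
    intro n
    calc a * d ^ n * a = a * d ^ n * a⁻¹ := by rw [hainv]
      _ = (a * d * a⁻¹) ^ n := by rw [conj_zpow]
      _ = (a * d * a) ^ n := by rw [hainv]
      _ = (d ^ k) ^ n := by rw [hk]
      _ = d ^ (k * n) := by rw [← zpow_mul]
  -- k is odd
  have hkk : d ^ (k * k) = d ^ (1 : ℤ) := by
    have h := hconj k
    have : a * d ^ k * a = d := by
      rw [hk]
      calc a * (a * d * a) * a = (a * a) * d * (a * a) := by group
        _ = d := by rw [haa]; group
    rw [this] at h; rw [← h, zpow_one]
  have hkdvd : ((2 * g : ℕ) : ℤ) ∣ 1 - k * k := by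
    rw [← hd]
    exact Int.ModEq.dvd (zpow_eq_zpow_iff_modEq.mp hkk)
  have hkodd : Odd k := by
    rcases Int.even_or_odd k with hev | hod
    · exfalso
      obtain ⟨c, hc⟩ := hkdvd
      obtain ⟨t, ht⟩ := hev
      have : (1 : ℤ) - (t + t) * (t + t) = (2 * g : ℕ) * c := by rw [← ht, ← hc]
      have h2 : (2:ℤ) ∣ (2 * g : ℕ) * c := ⟨(g : ℤ) * c, by push_cast; ring⟩
      rw [← this] at h2
      obtain ⟨u, hu⟩ := h2
      have hv : (t + t) * (t + t) = 2 * (2 * (t * t)) := by ring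
      omega
    · exact hod
  -- 2g divides (k+1)(g+1)
  have hdvd2 : ((2 * g : ℕ) : ℤ) ∣ (k + 1) * m := by
    have h := hconj (-m)
    rw [hkey] at h
    have : d ^ m = d ^ (k * (-m)) := h
    have hmod := zpow_eq_zpow_iff_modEq.mp this
    rw [hd] at hmod
    have := Int.ModEq.dvd hmod
    have h' : k * (-m) - m = -((k + 1) * m) := by ring
    rw [h'] at this
    exact (dvd_neg.mp this)
  -- hence 2g divides k+1
  have hdvdk1 : ((2 * g : ℕ) : ℤ) ∣ k + 1 := by
    obtain ⟨j, hj⟩ := hkodd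
    have hg1 : ((2 * g : ℕ) : ℤ) ∣ (k + 1) * (g : ℤ) := by
      refine ⟨j + 1, ?_⟩
      push_cast
      rw [hj]; ring
    have : ((2 * g : ℕ) : ℤ) ∣ (k + 1) * m - (k + 1) * (g : ℤ) := dvd_sub hdvd2 hg1
    have h' : (k + 1) * m - (k + 1) * (g : ℤ) = k + 1 := by rw [hmdef]; ring
    rwa [h'] at this
  have hconjd : ∀ n : ℤ, a * d ^ n * a = d ^ (-n) := by
    intro n
    rw [hconj n]
    rw [zpow_eq_zpow_iff_modEq, hd]
    have : k ≡ -1 [ZMOD ((2 * g : ℕ) : ℤ)] := by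
      refine Int.modEq_iff_dvd.mpr ?_
      have h := dvd_neg.mpr hdvdk1
      rwa [show -(k + 1) = -1 - k by ring] at h
    calc k * n ≡ (-1) * n [ZMOD (2 * g : ℕ)] := Int.ModEq.mul_right n this
      _ = -n := by ring
  have hcomm : ∀ s : ℤ, d ^ s * a = a * d ^ (-s) := by
    intro s
    have h := congrArg (fun x => a * x) (hconjd s)
    simp only [← mul_assoc] at h
    rw [haa, one_mul] at h
    exact h
  -- build the isomorphism
  haveI : NeZero (2 * g) := ⟨by omega⟩
  have L : ∀ s t : ℤ, ((s : ZMod (2 * g)) = (t : ZMod (2 * g))) → d ^ s = d ^ t := by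
    intro s t h
    rw [zpow_eq_zpow_iff_modEq, hd]
    exact (ZMod.intCast_eq_intCast_iff s t (2 * g)).mp h
  have VN : ∀ x : ZMod (2 * g), ((x.val : ℕ) : ZMod (2 * g)) = x := fun x =>
    ZMod.natCast_rightInverse x
  set F : DihedralGroup (2 * g) → G := dihedralMapAux (2 * g) d a with hF
  have hFmul : ∀ x y : DihedralGroup (2 * g), F (x * y) = F x * F y := by
    rintro (i | i) (j | j)
    · rw [DihedralGroup.r_mul_r, hF, dihedralMapAux_r, dihedralMapAux_r, dihedralMapAux_r,
        ← zpow_add]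
      apply L
      push_cast
      rw [VN, VN, VN]
    · rw [DihedralGroup.r_mul_sr, hF, dihedralMapAux_r, dihedralMapAux_sr, dihedralMapAux_sr,
        ← mul_assoc, hcomm, mul_assoc, ← zpow_add]
      congr 1
      apply L
      push_cast
      rw [VN, VN, VN]
      ring
    · rw [DihedralGroup.sr_mul_r, hF, dihedralMapAux_sr, dihedralMapAux_r, dihedralMapAux_sr,
        mul_assoc, ← zpow_add]
      congr 1
      apply L
      push_cast
      rw [VN, VN, VN]
    · rw [DihedralGroup.sr_mul_sr, hF, dihedralMapAux_r, dihedralMapAux_sr, dihedralMapAux_sr,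
        show (a * d ^ ((i.val : ℕ) : ℤ)) * (a * d ^ ((j.val : ℕ) : ℤ))
          = (a * d ^ ((i.val : ℕ) : ℤ) * a) * d ^ ((j.val : ℕ) : ℤ) by group,
        hconjd, ← zpow_add]
      apply L
      push_cast
      rw [VN, VN, VN]
      ring
  set f : DihedralGroup (2 * g) →* G := MonoidHom.mk' F hFmul with hfdef
  have hinj : Function.Injective f := by
    rw [injective_iff_map_eq_one]
    rintro (i | i) hx
    · have hx' : d ^ ((i.val : ℕ) : ℤ) = 1 := hx
      have h5 : ((orderOf d : ℕ) : ℤ) ∣ (i.val : ℤ) := orderOf_dvd_iff_zpow_eq_one.mpr hx'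
      rw [hd] at h5
      have hdd : 2 * g ∣ i.val := Int.natCast_dvd_natCast.mp h5
      have hi0 : i = 0 := (ZMod.val_eq_zero i).mp (Nat.eq_zero_of_dvd_of_lt hdd (ZMod.val_lt i))
      rw [hi0, DihedralGroup.one_def]
    · exfalso
      have hx' : a * d ^ ((i.val : ℕ) : ℤ) = 1 := hx
      have := eq_inv_of_mul_eq_one_left hx'
      rw [← zpow_neg] at this
      exact haN (this ▸ hdpow _)
  haveI : Finite G := Nat.finite_of_card_ne_zero (by omega)
  haveI : Fintype G := Fintype.ofFinite G
  have hcards : Fintype.card (DihedralGroup (2 * g)) = Fintype.card G := by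
    rw [DihedralGroup.card, ← Nat.card_eq_fintype_card, hcard]
    omega
  have hbij : Function.Bijective f :=
    (Fintype.bijective_iff_injective_and_card f).mpr ⟨hinj, hcards⟩
  exact ⟨(MulEquiv.ofBijective f hbij).symm⟩
end

section
/- Let g ≥ 2 be an even integer. Let D_{2g} be the dihedral group of order 4g with rotation ρ of order 2g and reflection z (Mathlib's DihedralGroup (2g)), and let φ be the involutive automorphism of D_{2g} given by φ(ρ) = ρ⁻¹ and φ(z) = ρ^{g−1}z. Then the semidirect product D_{2g} ⋊_φ C₂ (of order 8g) is isomorphic to the dihedral group of order 8g (Mathlib's DihedralGroup (4g)). -/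
/-!
Doubling rotation indices embeds `D_{2g}` into `D_{4g}`, and the reflection `t = sr (1 - g)`
conjugates the image exactly as `φ` acts on `D_{2g}`, so sending the generator of `C₂` to `t`
gives a homomorphism `D_{2g} ⋊ C₂ → D_{4g}`. All indices in the image of `D_{2g}` are even while
`1 - g` is odd, so `t` lies outside that image and the homomorphism is injective; both groups have
order `8g`.
-/

open DihedralGroup

namespace ZMod

def mulLeftHom (d : ℕ) {m n : ℕ} (h : n ∣ d * m) : ZMod m →+ ZMod n :=
  lift m ⟨(d : ℤ) • Int.castAddHom (ZMod n), by
    simpa [← Nat.cast_mul] using (natCast_eq_zero_iff _ _).2 h⟩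

variable {d m n : ℕ} (h : n ∣ d * m)

@[simp]
theorem mulLeftHom_intCast (x : ℤ) : mulLeftHom d h x = d * x := by
  simp [mulLeftHom]

@[simp]
theorem mulLeftHom_natCast (x : ℕ) : mulLeftHom d h x = d * x := by
  simpa using mulLeftHom_intCast h x

@[simp]
theorem mulLeftHom_one : mulLeftHom d h 1 = d := by
  simpa using mulLeftHom_natCast h 1

theorem mulLeftHom_injective (hd : d ≠ 0) (hn : n = d * m) :
    Function.Injective (mulLeftHom d h) := by
  refine (lift_injective m).2 fun x hx => ?_
  simp only [AddMonoidHom.smul_apply, Int.coe_castAddHom, zsmul_eq_mul, ← Int.cast_mul,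
    intCast_zmod_eq_zero_iff_dvd, hn, Nat.cast_mul] at hx
  exact (intCast_zmod_eq_zero_iff_dvd _ _).2 (Int.dvd_of_mul_dvd_mul_left (by exact_mod_cast hd) hx)

theorem two_mul_ne_intCast_of_odd (hn : 2 ∣ n) {k : ℤ} (hk : Odd k) (x : ZMod n) :
    2 * x ≠ k := by
  intro hx
  have := congrArg (castHom hn (ZMod 2)) hx
  obtain ⟨j, rfl⟩ := hk
  rw [map_mul, map_ofNat, map_intCast] at this
  push_cast at this
  simp [show (2 : ZMod 2) = 0 from rfl] at this

end ZMod

theorem multiplicative_zmod_two_eq_one_or_ofAdd_one (c : Multiplicative (ZMod 2)) :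
    c = 1 ∨ c = Multiplicative.ofAdd 1 := by
  revert c; decide

section zmodPowersHom

variable {G : Type*} [Group G] {n : ℕ}

def zmodPowersHom (x : G) (hx : x ^ n = 1) : Multiplicative (ZMod n) →* G :=
  AddMonoidHom.toMultiplicativeLeft <|
    ZMod.lift n ⟨zmultiplesHom (Additive G) (Additive.ofMul x), by
      simp only [zmultiplesHom_apply, natCast_zsmul, ← ofMul_pow, hx, ofMul_one]⟩

variable {x : G} (hx : x ^ n = 1)

@[simp]
theorem zmodPowersHom_ofAdd_intCast (k : ℤ) :
    zmodPowersHom x hx (Multiplicative.ofAdd (k : ZMod n)) = x ^ k :=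
  congrArg Additive.toMul (ZMod.lift_coe n _ k)

@[simp]
theorem zmodPowersHom_ofAdd_one : zmodPowersHom x hx (Multiplicative.ofAdd 1) = x := by
  simpa using zmodPowersHom_ofAdd_intCast hx 1

theorem zmodPowersHom_injective (ho : orderOf x = n) :
    Function.Injective (zmodPowersHom x hx) := by
  refine (injective_iff_map_eq_one _).2 fun c hc => ?_
  obtain ⟨k, hk⟩ := ZMod.intCast_surjective (Multiplicative.toAdd c)
  rw [← ofAdd_toAdd c, ← hk] at hc ⊢
  rw [zmodPowersHom_ofAdd_intCast, ← orderOf_dvd_iff_zpow_eq_one, ho] at hc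
  exact congrArg Multiplicative.ofAdd ((ZMod.intCast_zmod_eq_zero_iff_dvd k n).2 hc)

theorem comp_aut_eq_conj_comp_of_zmod_two {N H : Type*} [Group N] [Group H]
    (ψ : Multiplicative (ZMod 2) →* MulAut N) (f : N →* H) {t : H} (ht : t ^ 2 = 1)
    (h : f.comp (ψ (.ofAdd 1)).toMonoidHom = (MulAut.conj t).toMonoidHom.comp f)
    (c : Multiplicative (ZMod 2)) :
    f.comp (ψ c).toMonoidHom = (MulAut.conj (zmodPowersHom t ht c)).toMonoidHom.comp f := by
  rcases multiplicative_zmod_two_eq_one_or_ofAdd_one c with rfl | rfl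
  · ext; simp
  · simpa using h

end zmodPowersHom

theorem SemidirectProduct.lift_injective {N G H : Type*} [Group N] [Group G] [Group H]
    {φ : G →* MulAut N} {fn : N →* H} {fg : G →* H}
    (h : ∀ g, fn.comp (φ g).toMonoidHom = (MulAut.conj (fg g)).toMonoidHom.comp fn)
    (hn : Function.Injective fn) (hg : Function.Injective fg)
    (hdisj : Disjoint fn.range fg.range) :
    Function.Injective (lift fn fg h) := by
  refine (injective_iff_map_eq_one _).2 fun ⟨a, b⟩ hab => ?_
  change fn a * fg b = 1 at hab
  have hb : fg b = 1 :=
    Subgroup.disjoint_def.1 hdisj ⟨a⁻¹, by rw [map_inv, eq_inv_of_mul_eq_one_right hab]⟩ ⟨b, rfl⟩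
  rw [hb, mul_one] at hab
  exact SemidirectProduct.ext ((map_eq_one_iff fn hn).1 hab) ((map_eq_one_iff fg hg).1 hb)

namespace DihedralGroup

variable {m n : ℕ}

def map (f : ZMod m →+ ZMod n) : DihedralGroup m →* DihedralGroup n where
  toFun
    | r k => r (f k)
    | sr k => sr (f k)
  map_one' := congrArg r (map_zero f)
  map_mul' := by rintro (i | i) (j | j) <;> simp [map_add, map_sub]

@[simp]
theorem map_r (f : ZMod m →+ ZMod n) (k : ZMod m) : map f (r k) = r (f k) := rfl

@[simp]
theorem map_sr (f : ZMod m →+ ZMod n) (k : ZMod m) : map f (sr k) = sr (f k) := rfl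

theorem map_injective {f : ZMod m →+ ZMod n} (hf : Function.Injective f) :
    Function.Injective (map f) := by
  rintro (i | i) (j | j) h <;> simp_all [hf.eq_iff]

theorem r_neg_mul_sr_zero (k : ZMod n) : r (-k) * sr 0 = sr k := by
  simp [r_mul_sr]

end DihedralGroup

def doubling (g : ℕ) : ZMod (2 * g) →+ ZMod (4 * g) :=
  ZMod.mulLeftHom 2 ⟨1, by ring⟩

theorem doubling_injective (g : ℕ) : Function.Injective (doubling g) :=
  ZMod.mulLeftHom_injective _ two_ne_zero (by ring)

theorem sr_one_sub_notMem_range_map_doubling {g : ℕ} (hg : Even g) :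
    sr (1 - g : ZMod (4 * g)) ∉ (map (doubling g)).range := by
  rintro ⟨k | k, h⟩
  · simp at h
  · obtain ⟨k, rfl⟩ := ZMod.intCast_surjective k
    simp only [map_sr, sr.injEq, doubling, ZMod.mulLeftHom_intCast] at h
    have hodd : Odd (1 - g : ℤ) := by simpa [Int.odd_sub', parity_simps] using hg
    exact ZMod.two_mul_ne_intCast_of_odd (n := 4 * g) ⟨2 * g, by ring⟩ hodd k
      (by push_cast at h ⊢; exact h)

theorem map_doubling_comp_eq_conj_comp {g : ℕ}
    (φ : DihedralGroup (2 * g) ≃* DihedralGroup (2 * g))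
    (hφr : ∀ k : ZMod (2 * g), φ (r k) = r (-k))
    (hφs : ∀ k : ZMod (2 * g), φ (r k * sr 0) = r ((g : ZMod (2 * g)) - 1 - k) * sr 0) :
    (map (doubling g)).comp φ.toMonoidHom =
      (MulAut.conj (sr (1 - g : ZMod (4 * g)))).toMonoidHom.comp (map (doubling g)) := by
  ext (k | k)
  · simp [hφr, sr_mul_r, sr_mul_sr]
  · rw [← r_neg_mul_sr_zero k, MonoidHom.comp_apply, MonoidHom.comp_apply,
      MulEquiv.coe_toMonoidHom, hφs]
    simp only [MulEquiv.toMonoidHom_eq_coe, MonoidHom.coe_coe, MulAut.conj_apply, inv_sr, map_sr,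
      r_mul_sr, sr_mul_sr, sr.injEq, doubling, map_zero, map_sub, map_neg, ZMod.mulLeftHom_one,
      ZMod.mulLeftHom_natCast]
    ring

/-- Let `g ≥ 2` be even, let `φ` be the involutive automorphism of `DihedralGroup (2g)` given by
`φ(ρ^k) = ρ^{−k}`, `φ(ρ^k z) = ρ^{g−1−k} z` (where `ρ = r 1`, `z = sr 0`), and let `ψ` be the
corresponding homomorphism `C₂ →* Aut(D_{2g})`. Then the semidirect product `D_{2g} ⋊[ψ] C₂`
(of order `8g`) is isomorphic to the dihedral group of order `8g`. -/
theorem semidirect_product_is_dihedral_of_even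
    (g : ℕ) (hg : 2 ≤ g) (hgeven : Even g)
    (φ : DihedralGroup (2 * g) ≃* DihedralGroup (2 * g))
    (hφr : ∀ k : ZMod (2 * g), φ (DihedralGroup.r k) = DihedralGroup.r (-k))
    (hφs : ∀ k : ZMod (2 * g), φ (DihedralGroup.r k * DihedralGroup.sr 0) =
      DihedralGroup.r ((g : ZMod (2 * g)) - 1 - k) * DihedralGroup.sr 0)
    (ψ : Multiplicative (ZMod 2) →* MulAut (DihedralGroup (2 * g)))
    (hψ : ψ (Multiplicative.ofAdd 1) = φ) :
    Nonempty ((DihedralGroup (2 * g) ⋊[ψ] Multiplicative (ZMod 2)) ≃* DihedralGroup (4 * g)) := by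
  have : NeZero (4 * g) := ⟨by omega⟩
  let t : DihedralGroup (4 * g) := sr (1 - g)
  have ht : t ^ 2 = 1 := pow_two t ▸ sr_mul_self _
  let F := SemidirectProduct.lift (map (doubling g)) (zmodPowersHom t ht)
    (comp_aut_eq_conj_comp_of_zmod_two ψ _ ht (hψ ▸ map_doubling_comp_eq_conj_comp φ hφr hφs))
  have hF : Function.Injective F := by
    refine SemidirectProduct.lift_injective _ (map_injective (doubling_injective g))
      (zmodPowersHom_injective ht (orderOf_sr _)) ?_
    rw [Subgroup.disjoint_def]
    rintro _ hx ⟨c, rfl⟩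
    rcases multiplicative_zmod_two_eq_one_or_ofAdd_one c with rfl | rfl
    · exact map_one _
    · exact absurd (by simpa using hx) (sr_one_sub_notMem_range_map_doubling hgeven)
  have hcard : Nat.card (DihedralGroup (4 * g)) ≤
      Nat.card (DihedralGroup (2 * g) ⋊[ψ] Multiplicative (ZMod 2)) := by
    rw [SemidirectProduct.card, nat_card, nat_card, Nat.card_congr Multiplicative.toAdd,
      Nat.card_zmod]
    omega
  exact ⟨MulEquiv.ofBijective F (hF.bijective_of_nat_card_le hcard)⟩
end

section
/- Let g ≥ 3 be an odd integer. Let D_{2g} be the dihedral group of order 4g with rotation ρ of order 2g and reflection z (Mathlib's DihedralGroup (2g)), and let φ be the involutive automorphism of D_{2g} given by φ(ρ) = ρ⁻¹ and φ(z) = ρ^{g−1}z. Then in the semidirect product G* = D_{2g} ⋊_φ C₂ (of order 8g), with x denoting the generator of the C₂ factor, the element (xz)^g is a central element of order 2, and G* is isomorphic to the direct product D_{2g} × C₂ of the dihedral group of order 4g with a cyclic group of order 2. -/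
/-!
Write `g = 2m + 1` and `c = 2m²`, so that `2c = 1 - g` and `cg = 0` in `ZMod (2g)`. The first
identity says that `φ` is conjugation by the reflection `sr c`, so `C₂` acts on `D_{2g}` by inner
automorphisms, and `(n, h) ↦ (n · f h, h)`, with `f : C₂ → D_{2g}` sending the generator to `sr c`,
is an isomorphism `D_{2g} ⋊ C₂ ≃* D_{2g} × C₂`. It sends `xz` to `(r (-c), x)`, hence `(xz)^g` to
`(r (-cg), x^g) = (1, x)`, which is central of order 2.
-/

namespace SemidirectProduct

variable {N G : Type*} [Group N] [Group G] {φ : G →* MulAut N}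

def mulEquivProdOfConj (f : G →* N) (hf : φ = MulAut.conj.comp f) : N ⋊[φ] G ≃* N × G where
  toFun x := (x.left * f x.right, x.right)
  invFun y := ⟨y.1 * (f y.2)⁻¹, y.2⟩
  left_inv x := by simp
  right_inv y := by simp
  map_mul' x y := by subst hf; ext <;> simp [mul_assoc]

variable (f : G →* N) (hf : φ = MulAut.conj.comp f)

@[simp]
theorem mulEquivProdOfConj_inl (n : N) : mulEquivProdOfConj f hf (inl n) = (n, 1) := by
  simp [mulEquivProdOfConj]

@[simp]
theorem mulEquivProdOfConj_inr (g : G) : mulEquivProdOfConj f hf (inr g) = (f g, g) := by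
  simp [mulEquivProdOfConj]

end SemidirectProduct

namespace DihedralGroup

variable {n : ℕ}

@[simp]
theorem conj_sr_r (i j : ZMod n) : MulAut.conj (sr i) (r j) = r (-j) := by
  simp [sr_mul_r, sr_mul_sr]

@[simp]
theorem conj_sr_sr (i j : ZMod n) : MulAut.conj (sr i) (sr j) = sr (2 * i - j) := by
  simp only [MulAut.conj_apply, sr_mul_sr, inv_sr, r_mul_sr, sr.injEq]
  ring

end DihedralGroup

theorem ZMod.mem_zpowers_ofAdd_one {n : ℕ} (x : Multiplicative (ZMod n)) :
    x ∈ Subgroup.zpowers (Multiplicative.ofAdd 1) :=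
  ⟨(x.toAdd.cast : ℤ), by simp [← ofAdd_zsmul]⟩

theorem semidirect_product_is_direct_product_of_odd_general
    (g : ℕ) (hgodd : Odd g)
    (φ : DihedralGroup (2 * g) ≃* DihedralGroup (2 * g))
    (hφr : ∀ k : ZMod (2 * g), φ (DihedralGroup.r k) = DihedralGroup.r (-k))
    (hφs : ∀ k : ZMod (2 * g), φ (DihedralGroup.r k * DihedralGroup.sr 0) =
      DihedralGroup.r ((g : ZMod (2 * g)) - 1 - k) * DihedralGroup.sr 0)
    (ψ : Multiplicative (ZMod 2) →* MulAut (DihedralGroup (2 * g)))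
    (hψ : ψ (Multiplicative.ofAdd 1) = φ)
    (x : DihedralGroup (2 * g) ⋊[ψ] Multiplicative (ZMod 2))
    (hx : x = SemidirectProduct.inr (Multiplicative.ofAdd 1))
    (z : DihedralGroup (2 * g) ⋊[ψ] Multiplicative (ZMod 2))
    (hz : z = SemidirectProduct.inl (DihedralGroup.sr 0)) :
    orderOf ((x * z) ^ g) = 2 ∧
    (x * z) ^ g ∈ Subgroup.center (DihedralGroup (2 * g) ⋊[ψ] Multiplicative (ZMod 2)) ∧
    Nonempty ((DihedralGroup (2 * g) ⋊[ψ] Multiplicative (ZMod 2)) ≃*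
      DihedralGroup (2 * g) × Multiplicative (ZMod 2)) := by
  open DihedralGroup SemidirectProduct in
  obtain ⟨m, hm⟩ := hgodd
  have h2g : (2 * g : ZMod (2 * g)) = 0 := by exact_mod_cast ZMod.natCast_self (2 * g)
  have hgm : (g : ZMod (2 * g)) = 2 * m + 1 := by rw [hm]; push_cast; ring
  set c : ZMod (2 * g) := 2 * m ^ 2
  have hc : 2 * c = 1 - g := by linear_combination m * h2g + (1 - 2 * m) * hgm
  have hcg : c * g = 0 := by linear_combination m ^ 2 * h2g
  have hφ : φ = MulAut.conj (sr c) := by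
    ext (k | k)
    · simp [hφr]
    · have hφsr := hφs (-k)
      simp only [r_mul_sr, zero_sub, neg_neg] at hφsr
      rw [hφsr, conj_sr_sr, hc]
      congr 1; ring
  let f : Multiplicative (ZMod 2) →* DihedralGroup (2 * g) :=
    monoidHomOfForallMemZpowers ZMod.mem_zpowers_ofAdd_one (g' := sr c) (by simp [orderOf_sr])
  have hψf : ψ = MulAut.conj.comp f :=
    (MonoidHom.eq_iff_eq_on_generator ZMod.mem_zpowers_ofAdd_one _ _).2 (by simp [f, hψ, hφ])
  let e := mulEquivProdOfConj f hψf
  have hexz : e (x * z) = (r (-c), Multiplicative.ofAdd 1) := by simp [e, f, hx, hz, sr_mul_sr]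
  have he : e ((x * z) ^ g) = (1, Multiplicative.ofAdd 1) := by
    simp [hexz, r_pow, hcg, ← ofAdd_nsmul, ZMod.natCast_eq_one_iff_odd.2 ⟨m, hm⟩]
  refine ⟨?_, ?_, ⟨e⟩⟩
  · rw [← e.orderOf_eq, he, Prod.orderOf_mk]
    simp
  · rw [← SetLike.mem_coe, Subgroup.coe_center, ← MulEquivClass.apply_mem_center_iff e, he]
    simp [Set.center_prod, Set.center_eq_univ]

/-- Let `g ≥ 3` be odd, let `φ` be the involutive automorphism of `DihedralGroup (2g)` given by
`φ(ρ^k) = ρ^{−k}`, `φ(ρ^k z) = ρ^{g−1−k} z` (where `ρ = r 1`, `z = sr 0`), and let `ψ` be the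
corresponding homomorphism `C₂ →* Aut(D_{2g})`. Then in the semidirect product
`G* = D_{2g} ⋊[ψ] C₂` (of order `8g`), with `x` the generator of the `C₂` factor and
`z = sr 0`, the element `(xz)^g` is a central element of order 2, and `G*` is isomorphic to
the direct product `D_{2g} × C₂`. -/
theorem semidirect_product_is_direct_product_of_odd
    (g : ℕ) (hg : 3 ≤ g) (hgodd : Odd g)
    (φ : DihedralGroup (2 * g) ≃* DihedralGroup (2 * g))
    (hφr : ∀ k : ZMod (2 * g), φ (DihedralGroup.r k) = DihedralGroup.r (-k))
    (hφs : ∀ k : ZMod (2 * g), φ (DihedralGroup.r k * DihedralGroup.sr 0) =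
      DihedralGroup.r ((g : ZMod (2 * g)) - 1 - k) * DihedralGroup.sr 0)
    (ψ : Multiplicative (ZMod 2) →* MulAut (DihedralGroup (2 * g)))
    (hψ : ψ (Multiplicative.ofAdd 1) = φ)
    (x : DihedralGroup (2 * g) ⋊[ψ] Multiplicative (ZMod 2))
    (hx : x = SemidirectProduct.inr (Multiplicative.ofAdd 1))
    (z : DihedralGroup (2 * g) ⋊[ψ] Multiplicative (ZMod 2))
    (hz : z = SemidirectProduct.inl (DihedralGroup.sr 0)) :
    orderOf ((x * z) ^ g) = 2 ∧
    (x * z) ^ g ∈ Subgroup.center (DihedralGroup (2 * g) ⋊[ψ] Multiplicative (ZMod 2)) ∧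
    Nonempty ((DihedralGroup (2 * g) ⋊[ψ] Multiplicative (ZMod 2)) ≃*
      DihedralGroup (2 * g) × Multiplicative (ZMod 2)) :=
  semidirect_product_is_direct_product_of_odd_general g hgodd φ hφr hφs ψ hψ x hx z hz
end

section
/- Let g ≥ 2 be an integer and let G be a group of order 8g generated by elements x, y, w with x² = y² = w² = 1, such that wx has order 2g, (xy)² = 1, y(wx)y = (wx)^t for some integer t, and (y · (wx)^g w)² = 1. Then (yw)² = 1; consequently y commutes with both x and w, and G is isomorphic to the direct product of the dihedral group of order 4g with a cyclic group of order 2 (DihedralGroup (2g) × C₂), with G = ⟨x, w⟩ × ⟨y⟩. -/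
section AuxCase1b

variable {G : Type*} [Group G]

private lemma conj_rule_case1b {a : G} (c d : G) (hc : c * c = 1) (hcd : c * a * c = d)
    (m : ℤ) (u : G) : c * (a ^ m * u) = d ^ m * (c * u) := by
  have hci : c⁻¹ = c := inv_eq_of_mul_eq_one_right hc
  have h1 : c * a ^ m * c⁻¹ = d ^ m := by rw [← conj_zpow, hci, hcd]
  calc c * (a ^ m * u) = (c * a ^ m) * u := (mul_assoc _ _ _).symm
    _ = (c * a ^ m * c⁻¹ * c) * u := by rw [mul_assoc (c * a ^ m), inv_mul_cancel, mul_one]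
    _ = d ^ m * c * u := by rw [h1]
    _ = d ^ m * (c * u) := mul_assoc _ _ _

private def dihMapCase1b (a w : G) (n : ℕ) : DihedralGroup n → G
  | .r i => a ^ (i.val : ℤ)
  | .sr i => w * a ^ (i.val : ℤ)

end AuxCase1b

private lemma arith_case1b (g : ℕ) (hg : 2 ≤ g) (t : ℤ)
    (h1 : (2 * (g:ℤ)) ∣ (t - 1) * (g + 1))
    (h2 : (2 * (g:ℤ)) ∣ (t - 1) * (t + 1)) :
    (2 * (g:ℤ)) ∣ (t - 1) := by
  have hg0 : (g : ℤ) ≠ 0 := by positivity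
  have hgs : (g : ℤ) ∣ (t - 1) := by
    have hco : IsCoprime (g : ℤ) ((g:ℤ) + 1) := ⟨-1, 1, by ring⟩
    exact hco.dvd_of_dvd_mul_right (dvd_trans ⟨2, by ring⟩ h1)
  obtain ⟨k, hk⟩ := hgs
  rcases Nat.even_or_odd g with ⟨m, hm⟩ | ⟨m, hm⟩
  · have hco : IsCoprime (2 * (g:ℤ)) ((g:ℤ) + 1) :=
      ⟨(m : ℤ), 1 - 2 * m, by push_cast [hm]; ring⟩
    exact hco.dvd_of_dvd_mul_right h1
  · have h2' : (g:ℤ) * 2 ∣ (g:ℤ) * (k * ((g:ℤ) * k + 2)) := by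
      rw [mul_comm ((g:ℤ)) 2]
      calc (2 * (g:ℤ)) ∣ (t - 1) * (t + 1) := h2
        _ = (g:ℤ) * (k * ((g:ℤ) * k + 2)) := by
            linear_combination (t + 1 + (g:ℤ) * k) * hk
    have h2k : (2 : ℤ) ∣ k * ((g:ℤ) * k + 2) := (mul_dvd_mul_iff_left hg0).mp h2'
    have hgk2 : (2:ℤ) ∣ (g:ℤ) * (k * k) := by
      obtain ⟨c, hc⟩ := h2k
      exact ⟨c - k, by linarith [hc]⟩
    have hk2 : (2:ℤ) ∣ k * k := by
      rcases Int.prime_two.dvd_mul.mp hgk2 with h | h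
      · exfalso; obtain ⟨c, hc⟩ := h; omega
      · exact h
    have h2k' : (2:ℤ) ∣ k := by
      rcases Int.prime_two.dvd_mul.mp hk2 with h | h <;> exact h
    obtain ⟨k', hk'⟩ := h2k'
    exact ⟨k', by rw [hk, hk']; ring⟩

/-- Let `g ≥ 2` and let `G` be a group of order `8g` generated by `x, y, w` with
`x² = y² = w² = 1`, `wx` of order `2g`, `(xy)² = 1`, `y(wx)y = (wx)^t` for some integer `t`,
and `(y·(wx)^g·w)² = 1`. Then `(yw)² = 1`; consequently `y` commutes with both `x` and `w`,
and `G` is the internal direct product `⟨x,w⟩ × ⟨y⟩`, isomorphic to the direct product of the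
dihedral group of order `4g` with a cyclic group of order 2. -/
theorem extended_group_is_dihedral_times_C2_case1b
    (g : ℕ) (hg : 2 ≤ g) (G : Type*) [Group G]
    (hcard : Nat.card G = 8 * g) (x y w : G)
    (hgen : Subgroup.closure ({x, y, w} : Set G) = ⊤)
    (hx : x ^ 2 = 1) (hy : y ^ 2 = 1) (hw : w ^ 2 = 1)
    (hwx : orderOf (w * x) = 2 * g) (hxy : (x * y) ^ 2 = 1)
    (t : ℤ) (ht : y * (w * x) * y = (w * x) ^ t)
    (hyz : (y * ((w * x) ^ g * w)) ^ 2 = 1) :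
    (y * w) ^ 2 = 1 ∧ Commute y x ∧ Commute y w ∧
    Subgroup.closure ({x, w} : Set G) ⊔ Subgroup.closure ({y} : Set G) = ⊤ ∧
    Subgroup.closure ({x, w} : Set G) ⊓ Subgroup.closure ({y} : Set G) = ⊥ ∧
    Nonempty (G ≃* DihedralGroup (2 * g) × Multiplicative (ZMod 2)) := by
  haveI : NeZero (2 * g) := ⟨by omega⟩
  haveI : Fact (1 < 2 * g) := ⟨by omega⟩
  haveI : Finite G := Nat.finite_of_card_ne_zero (by rw [hcard]; omega)
  set a : G := w * x with ha
  -- basic involution facts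
  have hx1 : x * x = 1 := by rw [← pow_two]; exact hx
  have hy1 : y * y = 1 := by rw [← pow_two]; exact hy
  have hw1 : w * w = 1 := by rw [← pow_two]; exact hw
  have hxi : x⁻¹ = x := inv_eq_of_mul_eq_one_right hx1
  have hyi : y⁻¹ = y := inv_eq_of_mul_eq_one_right hy1
  have hwi : w⁻¹ = w := inv_eq_of_mul_eq_one_right hw1
  have ha2g : a ^ (2 * g) = 1 := by rw [← hwx]; exact pow_orderOf_eq_one a
  -- structural identities
  have hax : a * x = w := by rw [ha, mul_assoc, hx1, mul_one]
  have hwa_x : w * a = x := by rw [ha, ← mul_assoc, hw1, one_mul]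
  have hxw_inv : x * w = a ^ (-1 : ℤ) := by
    rw [zpow_neg, zpow_one, ha, mul_inv_rev, hxi, hwi]
  have hwaw : w * a * w = a⁻¹ := by
    rw [ha, mul_inv_rev, hxi, hwi, ← mul_assoc, hw1, one_mul]
  have hxax : x * a * x = a⁻¹ := by
    rw [ha, mul_inv_rev, hxi, hwi, mul_assoc x (w*x) x, mul_assoc w x x, hx1, mul_one]
  have hcomm_xy : y * x = x * y := by
    have h := hxy
    rw [pow_two] at h
    have hinv : (x*y)⁻¹ = x*y := inv_eq_of_mul_eq_one_right h
    calc y * x = y⁻¹ * x⁻¹ := by rw [hyi, hxi]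
      _ = (x*y)⁻¹ := (mul_inv_rev x y).symm
      _ = x * y := hinv
  have hyyu : ∀ u : G, y * (y * u) = u := fun u => by rw [← mul_assoc, hy1, one_mul]
  -- conjugation rules
  have hy_r : ∀ (m : ℤ) (u : G), y * (a ^ m * u) = a ^ (t * m) * (y * u) := by
    intro m u
    rw [conj_rule_case1b y (a ^ t) hy1 ht m u, ← zpow_mul]
  have hw_r : ∀ (m : ℤ) (u : G), w * (a ^ m * u) = a ^ (-m) * (w * u) := by
    intro m u
    rw [conj_rule_case1b w a⁻¹ hw1 hwaw m u, inv_zpow, ← zpow_neg]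
  have hx_r : ∀ (m : ℤ) (u : G), x * (a ^ m * u) = a ^ (-m) * (x * u) := by
    intro m u
    rw [conj_rule_case1b x a⁻¹ hx1 hxax m u, inv_zpow, ← zpow_neg]
  have hyw_mul : y * w = a ^ t * (x * y) := by
    calc y * w = y * (a * x) := by rw [hax]
      _ = y * (a ^ (1:ℤ) * x) := by rw [zpow_one]
      _ = a ^ (t * 1) * (y * x) := hy_r 1 x
      _ = a ^ t * (x * y) := by rw [mul_one, hcomm_xy]
  have hyw_r : ∀ u : G, y * (w * u) = a ^ t * (x * (y * u)) := fun u => by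
    rw [← mul_assoc, hyw_mul, mul_assoc, mul_assoc]
  -- the main relation
  have h0 : (y * (a ^ (g:ℤ) * w)) * (y * (a ^ (g:ℤ) * w)) = 1 := by
    have h := hyz
    rw [← zpow_natCast a g, pow_two] at h
    exact h
  have hcompute : (y * (a ^ (g:ℤ) * w)) * (y * (a ^ (g:ℤ) * w))
      = a ^ (t * (g:ℤ) + t - (g:ℤ) - 1) := by
    calc (y * (a ^ (g:ℤ) * w)) * (y * (a ^ (g:ℤ) * w))
        = y * (a ^ (g:ℤ) * (w * (y * (a ^ (g:ℤ) * w)))) := by simp only [mul_assoc]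
      _ = a ^ (t * (g:ℤ)) * (y * (w * (y * (a ^ (g:ℤ) * w)))) := by rw [hy_r]
      _ = a ^ (t * (g:ℤ)) * (a ^ t * (x * (y * (y * (a ^ (g:ℤ) * w))))) := by rw [hyw_r]
      _ = a ^ (t * (g:ℤ)) * (a ^ t * (x * (a ^ (g:ℤ) * w))) := by rw [hyyu]
      _ = a ^ (t * (g:ℤ)) * (a ^ t * (a ^ (-(g:ℤ)) * (x * w))) := by rw [hx_r]
      _ = a ^ (t * (g:ℤ)) * (a ^ t * (a ^ (-(g:ℤ)) * a ^ (-1:ℤ))) := by rw [hxw_inv]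
      _ = a ^ (t * (g:ℤ) + t - (g:ℤ) - 1) := by
          rw [← zpow_add, ← zpow_add, ← zpow_add]; congr 1; ring
  have hrel : a ^ (t * (g:ℤ) + t - (g:ℤ) - 1) = 1 := hcompute.symm.trans h0
  -- order-of divisibilities
  have h1dvd : (2 * (g:ℤ)) ∣ (t - 1) * ((g:ℤ) + 1) := by
    have hd := orderOf_dvd_iff_zpow_eq_one.mpr hrel
    rw [hwx] at hd
    push_cast at hd
    rw [show (t - 1) * ((g:ℤ) + 1) = t * (g:ℤ) + t - (g:ℤ) - 1 from by ring]
    exact hd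
  have e1 : y * a ^ (t:ℤ) = a ^ (t * t) * y := by
    have h := hy_r t 1
    simp only [mul_one] at h
    exact h
  have e2 : y * a ^ (t:ℤ) = a * y := by
    rw [← ht, ← mul_assoc, ← mul_assoc, hy1, one_mul]
  have e3 : a ^ (t * t : ℤ) = a := mul_right_cancel (e1.symm.trans e2)
  have h2dvd : (2 * (g:ℤ)) ∣ (t - 1) * (t + 1) := by
    have hz : a ^ (t * t - 1 : ℤ) = 1 := by
      rw [zpow_sub, e3, zpow_one]
      exact mul_inv_cancel a
    have hd := orderOf_dvd_iff_zpow_eq_one.mpr hz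
    rw [hwx] at hd
    push_cast at hd
    rw [show (t - 1) * (t + 1) = t * t - 1 from by ring]
    exact hd
  have hdvd : (2 * (g:ℤ)) ∣ (t - 1) := arith_case1b g hg t h1dvd h2dvd
  -- hence a^t = a and y is central
  have hat : a ^ (t:ℤ) = a := by
    obtain ⟨c, hc⟩ := hdvd
    rw [show (t:ℤ) = 1 + (2 * (g:ℤ)) * c from by linarith, zpow_add, zpow_one, zpow_mul]
    rw [show (2 * (g:ℤ)) = ((2*g : ℕ) : ℤ) from by push_cast; ring, zpow_natCast, ha2g,
      one_zpow, mul_one]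
  have hya_c : y * a = a * y := by
    have h := hy_r 1 1
    simp only [mul_one, zpow_one] at h
    rw [hat] at h
    exact h
  have hyw_c : y * w = w * y := by rw [hyw_mul, hat, ← mul_assoc, hax]
  have hcyx : Commute y x := hcomm_xy
  have hcyw : Commute y w := hyw_c
  have hcya : Commute y a := hya_c
  have goal1 : (y * w) ^ 2 = 1 := by rw [hcyw.mul_pow, hy, hw, one_mul]

  -- ZMod/zpow bookkeeping
  have hzmod : ∀ m k : ℤ, ((m : ZMod (2*g)) = (k : ZMod (2*g))) → a ^ m = a ^ k := by
    intro m k h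
    rw [ZMod.intCast_eq_intCast_iff] at h
    obtain ⟨c, hc⟩ := (Int.ModEq.dvd h.symm :)
    rw [show m = k + ((2*g : ℕ) : ℤ) * c from by push_cast at hc ⊢; linarith, zpow_add,
      zpow_mul, zpow_natCast, ha2g, one_zpow, mul_one]
  have hval_cast : ∀ c : ZMod (2*g), (((c.val : ℤ)) : ZMod (2*g)) = c := by
    intro c
    rw [Int.cast_natCast]
    exact ZMod.natCast_rightInverse c
  have hvv : ∀ (c : ZMod (2*g)) (m : ℤ), ((m : ZMod (2*g)) = c) → a ^ ((c.val : ℤ)) = a ^ m := by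
    intro c m h
    apply hzmod
    rw [hval_cast c, h]
  have haw_swap : ∀ m : ℤ, a ^ m * w = w * a ^ (-m) := by
    intro m
    have h := hw_r (-m) 1
    simp only [mul_one, neg_neg] at h
    exact h.symm
  have hwwu : ∀ u : G, w * (w * u) = u := fun u => by rw [← mul_assoc, hw1, one_mul]
  -- the dihedral part is a multiplicative map
  have hfmul : ∀ d e : DihedralGroup (2*g),
      dihMapCase1b a w (2*g) (d * e) = dihMapCase1b a w (2*g) d * dihMapCase1b a w (2*g) e := by
    intro d e
    cases d with
    | r i =>
      cases e with
      | r j =>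
        simp only [DihedralGroup.r_mul_r, dihMapCase1b]
        rw [hvv (i + j) ((i.val : ℤ) + (j.val : ℤ)) (by push_cast [hval_cast]; ring), zpow_add]
      | sr j =>
        simp only [DihedralGroup.r_mul_sr, dihMapCase1b]
        calc w * a ^ (((j - i).val : ℤ))
            = w * a ^ (-(i.val : ℤ) + (j.val : ℤ)) := by
              rw [hvv (j - i) (-(i.val : ℤ) + (j.val : ℤ)) (by push_cast [hval_cast]; ring)]
          _ = (w * a ^ (-(i.val : ℤ))) * a ^ ((j.val : ℤ)) := by rw [zpow_add, mul_assoc]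
          _ = (a ^ ((i.val : ℤ)) * w) * a ^ ((j.val : ℤ)) := by rw [← haw_swap]
          _ = a ^ ((i.val : ℤ)) * (w * a ^ ((j.val : ℤ))) := by rw [mul_assoc]
    | sr i =>
      cases e with
      | r j =>
        simp only [DihedralGroup.sr_mul_r, dihMapCase1b]
        rw [hvv (i + j) ((i.val : ℤ) + (j.val : ℤ)) (by push_cast [hval_cast]; ring), zpow_add,
          mul_assoc]
      | sr j =>
        simp only [DihedralGroup.sr_mul_sr, dihMapCase1b]
        symm
        calc (w * a ^ ((i.val : ℤ))) * (w * a ^ ((j.val : ℤ)))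
            = w * ((a ^ ((i.val : ℤ)) * w) * a ^ ((j.val : ℤ))) := by simp only [mul_assoc]
          _ = w * ((w * a ^ (-(i.val : ℤ))) * a ^ ((j.val : ℤ))) := by rw [haw_swap]
          _ = w * (w * (a ^ (-(i.val : ℤ)) * a ^ ((j.val : ℤ)))) := by simp only [mul_assoc]
          _ = a ^ (-(i.val : ℤ)) * a ^ ((j.val : ℤ)) := hwwu _
          _ = a ^ (-(i.val : ℤ) + (j.val : ℤ)) := by rw [zpow_add]
          _ = a ^ (((j - i).val : ℤ)) := by
              rw [hvv (j - i) (-(i.val : ℤ) + (j.val : ℤ)) (by push_cast [hval_cast]; ring)]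
  -- powers of y
  haveI : Fact (1 < 2) := ⟨one_lt_two⟩
  have hymod : ∀ k : ℕ, y ^ (k % 2) = y ^ k := by
    intro k
    conv_rhs => rw [← Nat.div_add_mod k 2]
    rw [pow_add, pow_mul, hy, one_pow, one_mul]
  have hyadd : ∀ c d : ZMod 2, y ^ (c + d).val = y ^ c.val * y ^ d.val := by
    intro c d
    rw [ZMod.val_add, hymod, pow_add]
  have hcyf : ∀ d : DihedralGroup (2*g), Commute y (dihMapCase1b a w (2*g) d) := by
    intro d
    cases d with
    | r i => exact hcya.zpow_right _
    | sr i => exact Commute.mul_right hcyw (hcya.zpow_right _)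
  -- the isomorphism
  let F : DihedralGroup (2*g) × Multiplicative (ZMod 2) →* G :=
    MonoidHom.mk' (fun p => dihMapCase1b a w (2*g) p.1 * y ^ (Multiplicative.toAdd p.2).val)
      (by
        rintro ⟨d, c⟩ ⟨d', c'⟩
        show dihMapCase1b a w (2*g) (d * d') * y ^ (Multiplicative.toAdd (c * c')).val
          = (dihMapCase1b a w (2*g) d * y ^ (Multiplicative.toAdd c).val)
            * (dihMapCase1b a w (2*g) d' * y ^ (Multiplicative.toAdd c').val)
        rw [hfmul, toAdd_mul, hyadd]
        have hc1 : y ^ (Multiplicative.toAdd c).val * dihMapCase1b a w (2*g) d'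
            = dihMapCase1b a w (2*g) d' * y ^ (Multiplicative.toAdd c).val :=
          ((hcyf d').pow_left _).eq
        simp only [mul_assoc]
        congr 1
        rw [← mul_assoc, ← hc1, mul_assoc])
  have hF1 : F (DihedralGroup.sr 1, 1) = x := by
    show dihMapCase1b a w (2*g) (DihedralGroup.sr 1)
      * y ^ (Multiplicative.toAdd (1 : Multiplicative (ZMod 2))).val = x
    simp only [dihMapCase1b, toAdd_one, ZMod.val_zero, pow_zero, mul_one]
    rw [ZMod.val_one, Nat.cast_one, zpow_one, hwa_x]
  have hFw : F (DihedralGroup.sr 0, 1) = w := by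
    show dihMapCase1b a w (2*g) (DihedralGroup.sr 0)
      * y ^ (Multiplicative.toAdd (1 : Multiplicative (ZMod 2))).val = w
    simp only [dihMapCase1b, toAdd_one, ZMod.val_zero, pow_zero, mul_one, Nat.cast_zero,
      zpow_zero]
  have hFy : F (DihedralGroup.r 0, Multiplicative.ofAdd 1) = y := by
    show dihMapCase1b a w (2*g) (DihedralGroup.r 0)
      * y ^ (Multiplicative.toAdd (Multiplicative.ofAdd (1 : ZMod 2))).val = y
    simp only [dihMapCase1b, toAdd_ofAdd, ZMod.val_zero, Nat.cast_zero, zpow_zero, one_mul]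
    rw [ZMod.val_one, pow_one]
  have htop : F.range = ⊤ := by
    rw [eq_top_iff, ← hgen]
    refine (Subgroup.closure_le _).mpr ?_
    rintro u hu
    simp only [Set.mem_insert_iff, Set.mem_singleton_iff] at hu
    rcases hu with rfl | rfl | rfl
    · exact ⟨_, hF1⟩
    · exact ⟨_, hFy⟩
    · exact ⟨_, hFw⟩
  have hsurj : Function.Surjective F := MonoidHom.range_eq_top.mp htop
  have hcards : Nat.card (DihedralGroup (2*g) × Multiplicative (ZMod 2)) = Nat.card G := by
    rw [Nat.card_prod, Nat.card_eq_fintype_card, DihedralGroup.card,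
      show Nat.card (Multiplicative (ZMod 2)) = 2 from by simp [Nat.card_eq_fintype_card],
      hcard]
    ring
  have hbij : Function.Bijective F := (Nat.bijective_iff_surjective_and_card F).mpr ⟨hsurj, hcards⟩
  have e : (DihedralGroup (2*g) × Multiplicative (ZMod 2)) ≃* G := MulEquiv.ofBijective F hbij
  -- join is everything
  have hjoin : Subgroup.closure ({x, w} : Set G) ⊔ Subgroup.closure ({y} : Set G) = ⊤ := by
    rw [eq_top_iff, ← hgen]
    refine (Subgroup.closure_le _).mpr ?_
    rintro u hu
    simp only [Set.mem_insert_iff, Set.mem_singleton_iff] at hu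
    rcases hu with rfl | rfl | rfl
    · exact Subgroup.mem_sup_left (Subgroup.subset_closure (by simp))
    · exact Subgroup.mem_sup_right (Subgroup.subset_closure (by simp))
    · exact Subgroup.mem_sup_left (Subgroup.subset_closure (by simp))
  -- trivial intersection
  have hmeet : Subgroup.closure ({x, w} : Set G) ⊓ Subgroup.closure ({y} : Set G) = ⊥ := by
    rw [eq_bot_iff]
    rintro u hu
    rw [Subgroup.mem_inf] at hu
    obtain ⟨hu1, hu2⟩ := hu
    obtain ⟨n, hn⟩ := Subgroup.mem_closure_singleton.mp hu2
    have hy2z : y ^ (2:ℤ) = 1 := by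
      rw [show (2:ℤ) = ((2:ℕ):ℤ) from rfl, zpow_natCast, hy]
    have hcases : u = 1 ∨ u = y := by
      rcases Int.even_or_odd n with ⟨c, hc⟩ | ⟨c, hc⟩
      · left
        rw [← hn, hc, show c + c = 2 * c from by ring, zpow_mul, hy2z, one_zpow]
      · right
        rw [← hn, hc, zpow_add, zpow_mul, hy2z, one_zpow, one_mul, zpow_one]
    rcases hcases with rfl | rfl
    · exact Subgroup.one_mem ⊥
    · exfalso
      have hD : Subgroup.closure ({x, w} : Set G)
          ≤ (F.comp (MonoidHom.inl (DihedralGroup (2*g)) (Multiplicative (ZMod 2)))).range := by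
        refine (Subgroup.closure_le _).mpr ?_
        rintro u hu
        simp only [Set.mem_insert_iff, Set.mem_singleton_iff] at hu
        rcases hu with rfl | rfl
        · exact ⟨DihedralGroup.sr 1, hF1⟩
        · exact ⟨DihedralGroup.sr 0, hFw⟩
      obtain ⟨d, hd⟩ := hD hu1
      have heq : (d, (1 : Multiplicative (ZMod 2))) = (DihedralGroup.r 0, Multiplicative.ofAdd 1) :=
        hbij.injective (by rw [hFy]; exact hd)
      have h2 := congrArg Prod.snd heq
      simp only at h2
      exact absurd h2 (by decide)
  exact ⟨goal1, hcyx, hcyw, hjoin, hmeet, ⟨e.symm⟩⟩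
end

section
/- Let g ≥ 2 be an integer and let G be a group generated by elements x, y, w with x² = y² = w² = 1, such that wx has order 2g, (xy)² = 1, and y(wx)y = (wx)^t for some integer t. Suppose s is an integer with 1 ≤ s ≤ 2g − 1 such that z := y(wx)^s satisfies z² = 1 and (yz)² = 1. Then s = g; if moreover (zw)² = 1, then ywy = w, and if in addition G has order 8g, then G = ⟨x, w⟩ × ⟨y⟩ is isomorphic to the direct product of the dihedral group of order 4g with a cyclic group of order 2 (DihedralGroup (2g) × C₂). -/
lemma aux_dihedral_times_C2
    (g : ℕ) (hg : 2 ≤ g) (G : Type*) [Group G] (x y w : G)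
    (hgen : Subgroup.closure ({x, y, w} : Set G) = ⊤)
    (hx : x ^ 2 = 1) (hy : y ^ 2 = 1) (hw : w ^ 2 = 1)
    (hwx : orderOf (w * x) = 2 * g)
    (hyx : y * x = x * y) (hyw : y * w = w * y)
    (hcard : Nat.card G = 8 * g) :
    Subgroup.closure ({x, w} : Set G) ⊔ Subgroup.closure ({y} : Set G) = ⊤ ∧
    Subgroup.closure ({x, w} : Set G) ⊓ Subgroup.closure ({y} : Set G) = ⊥ ∧
    Nonempty (G ≃* DihedralGroup (2 * g) × Multiplicative (ZMod 2)) := by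
  haveI : NeZero (2 * g) := ⟨by omega⟩
  have hinv : ∀ u : G, u ^ 2 = 1 → u⁻¹ = u := by
    intro u h
    exact inv_eq_of_mul_eq_one_right (by rw [← sq]; exact h)
  set a := w * x with ha_def
  have ha2g : a ^ (2 * g) = 1 := by rw [← hwx]; exact pow_orderOf_eq_one a
  -- conjugation by w inverts a
  have hconj : ∀ k : ℤ, w * a ^ k * w = a ^ (-k) := by
    intro k
    have h1 : w * a * w⁻¹ = a⁻¹ := by
      rw [hinv w hw, ha_def]
      calc w * (w * x) * w = (w * w) * (x * w) := by group
        _ = x * w := by rw [← sq, hw, one_mul]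
        _ = (w * x)⁻¹ := by rw [mul_inv_rev, hinv x hx, hinv w hw]
    calc w * a ^ k * w = w * a ^ k * w⁻¹ := by rw [hinv w hw]
      _ = (w * a * w⁻¹) ^ k := conj_zpow.symm
      _ = (a⁻¹) ^ k := by rw [h1]
      _ = a ^ (-k) := by rw [inv_zpow, zpow_neg]
  have hcomm : ∀ k : ℤ, a ^ k * w = w * a ^ (-k) := by
    intro k
    calc a ^ k * w = (w * w) * (a ^ k * w) := by rw [← sq, hw, one_mul]
      _ = w * (w * a ^ k * w) := by group
      _ = w * a ^ (-k) := by rw [hconj]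
  -- zpow congruences
  have hZ : ∀ m k : ℤ, ((m : ZMod (2 * g)) = (k : ZMod (2 * g))) → a ^ m = a ^ k := by
    intro m k h
    rw [zpow_eq_zpow_iff_modEq, hwx]
    exact (ZMod.intCast_eq_intCast_iff m k (2 * g)).mp h
  have hvcast : ∀ i : ZMod (2 * g), (((i.val : ℤ)) : ZMod (2 * g)) = i := by
    intro i
    push_cast
    simp [ZMod.natCast_val, ZMod.cast_id]
  -- y is central
  have hcen : ∀ u : G, u * y = y * u := by
    have hle : Subgroup.closure ({x, y, w} : Set G) ≤ Subgroup.centralizer {y} := by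
      rw [Subgroup.closure_le]
      intro u hu
      simp only [SetLike.mem_coe]
      rw [Subgroup.mem_centralizer_iff]
      intro h hh
      rcases hh with rfl
      rcases hu with rfl | rfl | rfl
      · exact hyx
      · rfl
      · exact hyw
    intro u
    have hu : u ∈ Subgroup.centralizer {y} := hle (hgen ▸ Subgroup.mem_top u)
    exact (Subgroup.mem_centralizer_iff.mp hu y rfl).symm
  -- the map
  set F : DihedralGroup (2 * g) → G := fun d =>
    match d with
    | .r i => a ^ i.val
    | .sr i => w * a ^ i.val
    with hF_def
  set f : DihedralGroup (2 * g) × Multiplicative (ZMod 2) → G :=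
    fun p => F p.1 * y ^ (Multiplicative.toAdd p.2).val with hf_def
  have hFr : ∀ i : ZMod (2 * g), F (.r i) = a ^ i.val := fun _ => rfl
  have hFsr : ∀ i : ZMod (2 * g), F (.sr i) = w * a ^ i.val := fun _ => rfl
  have hvz : ∀ i : ZMod (2 * g), a ^ i.val = a ^ ((i.val : ℤ)) :=
    fun i => (zpow_natCast a i.val).symm
  have hFmul : ∀ d e : DihedralGroup (2 * g), F (d * e) = F d * F e := by
    intro d e
    rcases d with i | i <;> rcases e with j | j
    · rw [DihedralGroup.r_mul_r, hFr, hFr, hFr, hvz, hvz, hvz, ← zpow_add]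
      apply hZ
      push_cast
      simp [ZMod.natCast_val, ZMod.cast_id]
    · rw [DihedralGroup.r_mul_sr, hFr, hFsr, hFsr]
      calc w * a ^ (j - i).val = w * a ^ (((j - i).val : ℤ)) := by rw [hvz]
        _ = w * a ^ (-(i.val : ℤ) + (j.val : ℤ)) := by
            rw [hZ ((j - i).val : ℤ) (-(i.val : ℤ) + (j.val : ℤ)) (by push_cast; simp [ZMod.natCast_val, ZMod.cast_id]; ring)]
        _ = w * (a ^ (-(i.val : ℤ)) * a ^ ((j.val : ℤ))) := by rw [zpow_add]
        _ = (w * a ^ (-(i.val : ℤ))) * a ^ ((j.val : ℤ)) := by group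
        _ = (a ^ ((i.val : ℤ)) * w) * a ^ ((j.val : ℤ)) := by rw [← hcomm]
        _ = a ^ i.val * (w * a ^ j.val) := by rw [← hvz, ← hvz]; group
    · rw [DihedralGroup.sr_mul_r, hFsr, hFsr, hFr]
      rw [mul_assoc, hvz, hvz, hvz, ← zpow_add]
      congr 1
      apply hZ
      push_cast
      simp [ZMod.natCast_val, ZMod.cast_id]
    · rw [DihedralGroup.sr_mul_sr, hFr, hFsr, hFsr]
      calc a ^ (j - i).val = a ^ (((j - i).val : ℤ)) := by rw [hvz]
        _ = a ^ (-(i.val : ℤ) + (j.val : ℤ)) := by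
            rw [hZ ((j - i).val : ℤ) (-(i.val : ℤ) + (j.val : ℤ)) (by push_cast; simp [ZMod.natCast_val, ZMod.cast_id]; ring)]
        _ = (w * w) * (a ^ (-(i.val : ℤ)) * a ^ ((j.val : ℤ))) := by
            rw [← sq, hw, one_mul, zpow_add]
        _ = w * ((w * a ^ (-(i.val : ℤ))) * a ^ ((j.val : ℤ))) := by group
        _ = w * ((a ^ ((i.val : ℤ)) * w) * a ^ ((j.val : ℤ))) := by rw [← hcomm]
        _ = (w * a ^ i.val) * (w * a ^ j.val) := by rw [← hvz, ← hvz]; group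
  have hy2 : ∀ m : ℕ, y ^ (m % 2) = y ^ m := by
    intro m
    conv_rhs => rw [← Nat.div_add_mod m 2]
    rw [pow_add, pow_mul, hy, one_pow, one_mul]
  have hfmul : ∀ p q, f (p * q) = f p * f q := by
    rintro ⟨d, u⟩ ⟨e, v⟩
    show F (d * e) * y ^ (Multiplicative.toAdd (u * v)).val = _
    have h1 : (Multiplicative.toAdd (u * v)).val =
        ((Multiplicative.toAdd u).val + (Multiplicative.toAdd v).val) % 2 := by
      rw [toAdd_mul, ZMod.val_add]
    rw [hFmul, h1, hy2, pow_add]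
    show F d * F e * (y ^ (Multiplicative.toAdd u).val * y ^ (Multiplicative.toAdd v).val)
        = F d * y ^ (Multiplicative.toAdd u).val * (F e * y ^ (Multiplicative.toAdd v).val)
    have hc2 : Commute (F e) (y ^ (Multiplicative.toAdd u).val) :=
      Commute.pow_right (hcen (F e)) _
    rw [mul_assoc (F d), ← mul_assoc (F e), hc2.eq]
    group
  haveI : Fact (1 < 2 * g) := ⟨by omega⟩
  have hfw : f (.sr 0, 1) = w := by
    show (w * a ^ (0 : ZMod (2 * g)).val) * y ^ (Multiplicative.toAdd (1 : Multiplicative (ZMod 2))).val = w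
    simp [ZMod.val_zero, toAdd_one]
  have hfx : f (.sr 1, 1) = x := by
    show (w * a ^ (1 : ZMod (2 * g)).val) * y ^ (Multiplicative.toAdd (1 : Multiplicative (ZMod 2))).val = x
    rw [ZMod.val_one, toAdd_one, ZMod.val_zero, pow_zero, mul_one, pow_one, ha_def,
      ← mul_assoc, ← sq, hw, one_mul]
  have hfy : f (.r 0, Multiplicative.ofAdd 1) = y := by
    show a ^ (0 : ZMod (2 * g)).val * y ^ (Multiplicative.toAdd (Multiplicative.ofAdd (1 : ZMod 2))).val = y
    rw [ZMod.val_zero, pow_zero, one_mul, toAdd_ofAdd, ZMod.val_one, pow_one]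
  set φ : DihedralGroup (2 * g) × Multiplicative (ZMod 2) →* G := MonoidHom.mk' f hfmul with hφ_def
  have hrange : φ.range = ⊤ := by
    rw [eq_top_iff, ← hgen, Subgroup.closure_le]
    rintro u (rfl | rfl | rfl)
    · exact ⟨(.sr 1, 1), hfx⟩
    · exact ⟨(.r 0, Multiplicative.ofAdd 1), hfy⟩
    · exact ⟨(.sr 0, 1), hfw⟩
  have hsurj : Function.Surjective φ := MonoidHom.range_eq_top.mp hrange
  have hcards : Nat.card (DihedralGroup (2 * g) × Multiplicative (ZMod 2)) = 8 * g := by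
    rw [Nat.card_prod, Nat.card_eq_fintype_card, Nat.card_eq_fintype_card, DihedralGroup.card]
    have h2 : Fintype.card (Multiplicative (ZMod 2)) = 2 := by
      rw [Fintype.card_multiplicative, ZMod.card]
    rw [h2]
    ring
  have hfin : Finite G := Nat.finite_of_card_ne_zero (by omega)
  have hbij : Function.Bijective φ :=
    (Nat.bijective_iff_surjective_and_card φ).mpr ⟨hsurj, by rw [hcards, hcard]⟩
  set e := MulEquiv.ofBijective φ hbij with he_def
  refine ⟨?_, ?_, ⟨e.symm⟩⟩
  · rw [← Subgroup.closure_union, ← hgen]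
    congr 1
    ext u
    simp only [Set.mem_union, Set.mem_insert_iff, Set.mem_singleton_iff]
    tauto
  · set π : G →* Multiplicative (ZMod 2) := (MonoidHom.snd _ _).comp e.symm.toMonoidHom with hπ_def
    have hπ : ∀ u : G, π u = (e.symm u).2 := fun _ => rfl
    have hex : e.symm x = (.sr 1, 1) := by rw [MulEquiv.symm_apply_eq]; exact hfx.symm
    have hew : e.symm w = (.sr 0, 1) := by rw [MulEquiv.symm_apply_eq]; exact hfw.symm
    have hey : e.symm y = (.r 0, Multiplicative.ofAdd 1) := by
      rw [MulEquiv.symm_apply_eq]; exact hfy.symm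
    have hker : Subgroup.closure ({x, w} : Set G) ≤ π.ker := by
      rw [Subgroup.closure_le]
      rintro u (rfl | rfl) <;> simp only [SetLike.mem_coe, MonoidHom.mem_ker, hπ, hex, hew] <;> rfl
    rw [eq_bot_iff]
    intro u hu
    rw [Subgroup.mem_inf] at hu
    obtain ⟨n, hn⟩ := Subgroup.mem_closure_singleton.mp hu.2
    have hy1 : y * y = 1 := by rw [← sq]; exact hy
    have hcase : u = 1 ∨ u = y := by
      rcases Int.even_or_odd n with ⟨m, hm⟩ | ⟨m, hm⟩
      · left
        rw [← hn, hm, ← two_mul, zpow_mul, zpow_two, hy1, one_zpow]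
      · right
        rw [← hn, hm, zpow_add, zpow_mul, zpow_two, hy1, one_zpow, one_mul, zpow_one]
    rcases hcase with rfl | hueq
    · exact Subgroup.mem_bot.mpr rfl
    · exfalso
      have h1 : π u = 1 := hker hu.1
      rw [hueq, hπ, hey] at h1
      have h2 : Multiplicative.ofAdd (1 : ZMod 2) = (1 : Multiplicative (ZMod 2)) := h1
      exact absurd h2 (by decide)

/-- Let `g ≥ 2` and let `G` be a group generated by `x, y, w` with `x² = y² = w² = 1`, `wx` of
order `2g`, `(xy)² = 1`, and `y(wx)y = (wx)^t` for some integer `t`. Suppose `1 ≤ s ≤ 2g − 1`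
is such that `z := y(wx)^s` satisfies `z² = 1` and `(yz)² = 1`. Then `s = g`; if moreover
`(zw)² = 1`, then `ywy = w`, and if in addition `G` has order `8g`, then `G = ⟨x,w⟩ × ⟨y⟩` is
isomorphic to the direct product of the dihedral group of order `4g` with a cyclic group of
order 2. -/
theorem extended_group_is_dihedral_times_C2_case2
    (g : ℕ) (hg : 2 ≤ g) (G : Type*) [Group G] (x y w : G)
    (hgen : Subgroup.closure ({x, y, w} : Set G) = ⊤)
    (hx : x ^ 2 = 1) (hy : y ^ 2 = 1) (hw : w ^ 2 = 1)
    (hwx : orderOf (w * x) = 2 * g) (hxy : (x * y) ^ 2 = 1)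
    (t : ℤ) (ht : y * (w * x) * y = (w * x) ^ t)
    (s : ℕ) (hs1 : 1 ≤ s) (hs2 : s ≤ 2 * g - 1)
    (hz2 : (y * (w * x) ^ s) ^ 2 = 1)
    (hyz : (y * (y * (w * x) ^ s)) ^ 2 = 1) :
    s = g ∧
    ((y * (w * x) ^ s * w) ^ 2 = 1 →
      y * w * y = w ∧
      (Nat.card G = 8 * g →
        Subgroup.closure ({x, w} : Set G) ⊔ Subgroup.closure ({y} : Set G) = ⊤ ∧
        Subgroup.closure ({x, w} : Set G) ⊓ Subgroup.closure ({y} : Set G) = ⊥ ∧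
        Nonempty (G ≃* DihedralGroup (2 * g) × Multiplicative (ZMod 2)))) := by
  have hinv : ∀ u : G, u ^ 2 = 1 → u⁻¹ = u := fun u h =>
    inv_eq_of_mul_eq_one_right (by rw [← sq]; exact h)
  set a := w * x with ha_def
  have ha2g : a ^ (2 * g) = 1 := by rw [← hwx]; exact pow_orderOf_eq_one a
  have hsg : s = g := by
    have h1 : y * (y * a ^ s) = a ^ s := by
      rw [← mul_assoc, ← sq, hy, one_mul]
    rw [h1] at hyz
    have h2 : a ^ (2 * s) = 1 := by rw [mul_comm, pow_mul]; exact hyz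
    have hdvd : 2 * g ∣ 2 * s := hwx ▸ orderOf_dvd_of_pow_eq_one h2
    have hgs : g ∣ s := (mul_dvd_mul_iff_left (by norm_num : (2 : ℕ) ≠ 0)).mp hdvd
    obtain ⟨k, hk⟩ := hgs
    have hk0 : k ≠ 0 := by rintro rfl; rw [Nat.mul_zero] at hk; omega
    have hk2 : k < 2 := by
      by_contra h
      push_neg at h
      have h3 : 2 * g ≤ s := by
        calc 2 * g = g * 2 := Nat.mul_comm 2 g
          _ ≤ g * k := Nat.mul_le_mul_left g h
          _ = s := hk.symm
      omega
    have hk1 : k = 1 := by omega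
    rw [hk1, Nat.mul_one] at hk
    omega
  subst hsg
  refine ⟨rfl, ?_⟩
  intro hzw
  have hg2 : a ^ s * a ^ s = 1 := by rw [← pow_add, ← two_mul]; exact ha2g
  have hgi : (a ^ s)⁻¹ = a ^ s := inv_eq_of_mul_eq_one_right hg2
  have hcz : y * a ^ s = a ^ s * y := by
    have h1 := hinv _ hz2
    rw [mul_inv_rev, hgi, hinv y hy] at h1
    exact h1.symm
  have hwconj : w * a * w⁻¹ = a⁻¹ := by
    rw [hinv w hw, ha_def]
    calc w * (w * x) * w = (w * w) * (x * w) := by group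
      _ = x * w := by rw [← sq, hw, one_mul]
      _ = (w * x)⁻¹ := by rw [mul_inv_rev, hinv x hx, hinv w hw]
  have hwg : w * a ^ s * w = a ^ s := by
    calc w * a ^ s * w = w * a ^ s * w⁻¹ := by rw [hinv w hw]
      _ = (w * a * w⁻¹) ^ s := conj_pow.symm
      _ = (a⁻¹) ^ s := by rw [hwconj]
      _ = (a ^ s)⁻¹ := inv_pow a s
      _ = a ^ s := hgi
  have hawa : a ^ s * w * a ^ s = w := by
    calc a ^ s * w * a ^ s = a ^ s * (w * a ^ s * w⁻¹) * w := by group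
      _ = a ^ s * (w * a ^ s * w) * w := by rw [hinv w hw]
      _ = a ^ s * a ^ s * w := by rw [hwg]
      _ = w := by rw [hg2, one_mul]
  have h1 : (y * a ^ s * w) * (y * a ^ s * w) = 1 := by rw [← sq]; exact hzw
  have hywy : y * w * y = w := by
    calc y * w * y = y * (a ^ s * w * a ^ s) * y := by rw [hawa]
      _ = (y * a ^ s * w) * (a ^ s * y) := by group
      _ = (y * a ^ s * w) * (y * a ^ s) := by rw [← hcz]
      _ = (y * a ^ s * w) * (y * a ^ s) * (w * w) := by rw [← sq, hw, mul_one]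
      _ = ((y * a ^ s * w) * (y * a ^ s * w)) * w := by group
      _ = w := by rw [h1, one_mul]
  refine ⟨hywy, ?_⟩
  intro hcard
  have hyx : y * x = x * y := by
    have h2 := hinv _ hxy
    rw [mul_inv_rev, hinv x hx, hinv y hy] at h2
    exact h2
  have hyw' : y * w = w * y := by
    calc y * w = (y * w * y) * y := by rw [mul_assoc, mul_assoc, ← sq, hy, mul_one]
      _ = w * y := by rw [hywy]
  exact aux_dihedral_times_C2 s hg G x y w hgen hx hy hw hwx hyx hyw' hcard
end
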